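/- arXiv:2407.19309 — 15 statements merged into one kernel-verified Lean document; each statement's English description precedes it below -/
import Mathlib

section
/- Let G be a nontrivial group acting on a set X, and let H be a subgroup of G. For x ∈ X let H_x = {h ∈ H : h·x = x} be the stabilizer of x in H. If for all x, y ∈ X with x ≠ y the stabilizer H_x is not contained in H_y, then the subgroup generated by the normal closure of H in G together with the kernel of the action (i.e., ncl_G(H)·Ker(f), the join of the normal closure of H and the kernel of the permutation representation G → Sym(X)) is an essential subgroup of G. -/
/-- A subgroup `E` of `G` is *essential* if it is normal and meets every
nontrivial normal subgroup of `G` nontrivially. -/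
def IsEssential {G : Type*} [Group G] (E : Subgroup G) : Prop :=
  E.Normal ∧ ∀ N : Subgroup G, N.Normal → N ≠ ⊥ → E ⊓ N ≠ ⊥

/-! If a normal subgroup `N` meets `ncl_G(H) · Ker(f)` trivially, every `n ∈ N` commutes with `H`,
since each commutator `[n, h]` lies in `N ∩ ncl_G(H)`. Then every `h ∈ H` fixing `x` also fixes
`n x`, i.e. `H_x ≤ H_{n x}`, and the hypothesis forces `n x = x`. So `n` lies in the kernel, hence
in `N ∩ ncl_G(H) · Ker(f) = 1`. -/

namespace MulAction

variable {G X : Type*} [Group G] [MulAction G X]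

theorem inf_stabilizer_le_inf_stabilizer_smul {H : Subgroup G} {g : G}
    (hg : ∀ h ∈ H, Commute g h) (x : X) :
    H ⊓ stabilizer G x ≤ H ⊓ stabilizer G (g • x) := by
  rintro h ⟨hH, hx : h • x = x⟩
  exact ⟨hH, show h • g • x = g • x by rw [smul_smul, ← (hg h hH).eq, mul_smul, hx]⟩

theorem mem_ker_toPermHom_of_forall_commute {H : Subgroup G}
    (hstab : ∀ x y : X, x ≠ y →
      ¬ (H ⊓ stabilizer G x ≤ H ⊓ stabilizer G y))
    {g : G} (hg : ∀ h ∈ H, Commute g h) : g ∈ (toPermHom G X).ker := by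
  rw [MonoidHom.mem_ker]
  ext x
  by_contra hgx
  exact hstab x (g • x) (Ne.symm hgx) (inf_stabilizer_le_inf_stabilizer_smul hg x)

end MulAction

theorem stmt0_general {G X : Type*} [Group G] [MulAction G X]
    (H : Subgroup G)
    (hstab : ∀ x y : X, x ≠ y →
      ¬ (H ⊓ MulAction.stabilizer G x ≤ H ⊓ MulAction.stabilizer G y)) :
    IsEssential (Subgroup.normalClosure (H : Set G) ⊔ (MulAction.toPermHom G X).ker) := by
  refine ⟨Subgroup.sup_normal _ _, fun N hN hNbot hEN => hNbot (eq_bot_iff.mpr fun n hn => ?_)⟩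
  have hdisj := disjoint_iff.mpr hEN
  have hcomm : ∀ h ∈ H, Commute n h := fun h hh =>
    (Subgroup.commute_of_normal_of_disjoint _ _ Subgroup.normalClosure_normal hN
      (hdisj.mono_left le_sup_left) h n (Subgroup.subset_normalClosure hh) hn).symm
  have hker := MulAction.mem_ker_toPermHom_of_forall_commute hstab hcomm
  exact hdisj.le_bot ⟨le_sup_right (a := Subgroup.normalClosure (H : Set G)) hker, hn⟩

/-- If `G` is a nontrivial group acting on `X`, `H ≤ G`, and for all `x ≠ y` the
stabilizer of `x` in `H` is not contained in the stabilizer of `y` in `H`, then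
`ncl_G(H) · Ker(f)` is an essential subgroup of `G`. -/
theorem stmt0 {G X : Type*} [Group G] [Nontrivial G] [MulAction G X]
    (H : Subgroup G)
    (hstab : ∀ x y : X, x ≠ y →
      ¬ (H ⊓ MulAction.stabilizer G x ≤ H ⊓ MulAction.stabilizer G y)) :
    IsEssential (Subgroup.normalClosure (H : Set G) ⊔ (MulAction.toPermHom G X).ker) :=
  stmt0_general H hstab
end

section
/- Let G be a group and S a nontrivial malnormal subgroup of G. Then either the normal closure ncl_G(S) equals G, or ncl_G(S) is a proper essential subgroup of G. -/
/-- A subgroup `S` of `G` is *malnormal* if `gSg⁻¹ ∩ S = {1}` for every `g ∉ S`. -/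
def IsMalnormal {G : Type*} [Group G] (S : Subgroup G) : Prop :=
  ∀ g : G, g ∉ S → ∀ h : G, h ∈ S → g * h * g⁻¹ ∈ S → h = 1

/-!
A normal subgroup meeting `ncl_G(S)` trivially commutes elementwise with it, so it centralizes a
nontrivial element of `S`. Malnormality then forces it into `S ⊆ ncl_G(S)`, hence it is trivial.
-/

namespace IsMalnormal

variable {G : Type*} [Group G] {S : Subgroup G}

theorem mem_of_commute (hS : IsMalnormal S) {s g : G} (hs : s ∈ S) (hs1 : s ≠ 1)
    (hgs : Commute g s) : g ∈ S := by
  by_contra hg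
  exact hs1 (hS g hg s hs (by rwa [hgs.eq, mul_inv_cancel_right]))

theorem eq_bot_of_disjoint_normalClosure (hS : IsMalnormal S) (hSbot : S ≠ ⊥)
    {N : Subgroup G} (hN : N.Normal) (hdisj : Disjoint (Subgroup.normalClosure (S : Set G)) N) :
    N = ⊥ := by
  obtain ⟨s, hs, hs1⟩ := S.bot_or_exists_ne_one.resolve_left hSbot
  have hNS : N ≤ S := fun n hn =>
    hS.mem_of_commute hs hs1 <| Commute.symm <|
      Subgroup.commute_of_normal_of_disjoint _ N Subgroup.normalClosure_normal hN hdisj s n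
        (Subgroup.subset_normalClosure hs) hn
  exact hdisj.symm.eq_bot_of_le (hNS.trans Subgroup.le_normalClosure)

end IsMalnormal

/-- If `S` is a nontrivial malnormal subgroup of a group `G`, then either the normal
closure of `S` is all of `G`, or it is a proper essential subgroup of `G`. -/
theorem stmt3 {G : Type*} [Group G] (S : Subgroup G) (hSbot : S ≠ ⊥)
    (hS : IsMalnormal S) :
    Subgroup.normalClosure (S : Set G) = ⊤ ∨
      (IsEssential (Subgroup.normalClosure (S : Set G)) ∧
        Subgroup.normalClosure (S : Set G) ≠ ⊤) := by
  by_cases htop : Subgroup.normalClosure (S : Set G) = ⊤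
  · exact Or.inl htop
  · refine Or.inr ⟨⟨Subgroup.normalClosure_normal, fun N hN hNbot hinf => hNbot ?_⟩, htop⟩
    exact hS.eq_bot_of_disjoint_normalClosure hSbot hN (disjoint_iff.mpr hinf)
end

section
/- Let Λ be an index set with at least 2 elements, let (K_λ)_{λ∈Λ} be a family of nontrivial groups, and let G be the free product of the K_λ. Then for every λ ∈ Λ, the normal closure in G of the canonical image of K_λ is a proper essential subgroup of G. -/
open Subgroup

theorem IsEssential.of_centralizer_eq_bot {G : Type*} [Group G] {E : Subgroup G} [hE : E.Normal]
    (h : centralizer (E : Set G) = ⊥) : IsEssential E := by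
  refine ⟨hE, fun N hN hN_ne hEN => hN_ne (eq_bot_iff.mpr ?_)⟩
  rw [← h]
  exact fun n hn => mem_centralizer_iff.mpr fun e he =>
    commute_of_normal_of_disjoint E N hE hN (disjoint_iff.mpr hEN) e n he hn

namespace Monoid.CoprodI

variable {ι : Type*} {M : ι → Type*} [∀ i, Monoid (M i)]

namespace Word

variable [DecidableEq ι] [∀ i, DecidableEq (M i)]

theorem fstIdx_of_smul {i : ι} {m : M i} {w : Word M} (hw : w.fstIdx ≠ some i) (hm : m ≠ 1) :
    (of m • w).fstIdx = some i := by
  rw [← cons_eq_smul (h1 := hw) (h2 := hm), fstIdx_cons]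

theorem fstIdx_equiv_of {i : ι} {m : M i} (hm : m ≠ 1) : (equiv (of m)).fstIdx = some i :=
  fstIdx_of_smul (by simp [empty, fstIdx]) hm

theorem fstIdx_equiv_of_ne_some {i k : ι} (hki : k ≠ i) (m : M i) :
    (equiv (of m)).fstIdx ≠ some k := by
  by_cases hm : m = 1
  · simp [hm, equiv, empty, fstIdx]
  · rw [fstIdx_equiv_of hm]
    exact fun h => hki (Option.some_injective _ h).symm

theorem equiv_mul (x y : CoprodI M) : equiv (x * y) = x • equiv y :=
  mul_smul x y (empty : Word M)

theorem head_equivPair_equiv_of_mul {i : ι} (c : M i) (g : CoprodI M) :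
    (equivPair i (equiv (of c * g))).head = c * (equivPair i (equiv g)).head := by
  rw [equiv_mul, equivPair_smul_same]

theorem eq_empty_of_fstIdx_equiv_prod_mul_of {w : Word M} {i k : ι} {d : M i}
    (hw : w.fstIdx ≠ some k) (h : (equiv (w.prod * of d)).fstIdx = some k) : w = empty := by
  induction w using consRecOn generalizing k with
  | empty => rfl
  | cons l m w hw' hm ih =>
    exfalso
    have hlk : l ≠ k := fun hlk => hw (hlk ▸ fstIdx_cons ..)
    rw [prod_cons, mul_assoc, equiv_mul] at h
    by_cases hv : (equiv (w.prod * of d)).fstIdx = some l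
    · obtain rfl := ih hw' hv
      rw [prod_empty, one_mul] at hv h
      obtain rfl : l = i := by_contra fun hli => fstIdx_equiv_of_ne_some hli d hv
      rw [← equiv_mul, ← map_mul] at h
      exact fstIdx_equiv_of_ne_some (Ne.symm hlk) _ h
    · rw [fstIdx_of_smul hv hm] at h
      exact hlk (Option.some_injective _ h)

end Word

open Word

theorem of_mul_of_mul_of_notMem_range {i j : ι} (hji : j ≠ i) {b c : M j} (hb : b ≠ 1)
    (hc : c ≠ 1) {x : M i} (hx : x ≠ 1) :
    of b * of x * of c ∉ Set.range (of : M i →* CoprodI M) := by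
  classical
  rintro ⟨z, hz⟩
  have h : (equiv (of b * of x * of c)).fstIdx = some j := by
    rw [mul_assoc, equiv_mul, equiv_mul, fstIdx_of_smul _ hb]
    rw [fstIdx_of_smul _ hx]
    · exact fun h => hji (Option.some_injective _ h).symm
    rw [fstIdx_equiv_of hc]
    exact fun h => hji (Option.some_injective _ h)
  exact fstIdx_equiv_of_ne_some hji z (hz ▸ h)

variable {G : ι → Type*} [∀ i, Group (G i)]

theorem mem_range_of_of_commute {i : ι} {a : G i} (ha : a ≠ 1) {g : CoprodI G}
    (h : Commute (of a) g) : g ∈ Set.range (of : G i →* CoprodI G) := by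
  classical
  set p := equivPair i (equiv g)
  have hg : of p.head * p.tail.prod = g := by
    have := congrArg Word.prod (equivPair_head_smul_equivPair_tail (i := i) (equiv g))
    rw [prod_smul] at this
    exact this.trans (equiv.symm_apply_apply g)
  by_cases ht : p.tail = empty
  · exact ⟨p.head, by rw [← hg, ht, prod_empty, mul_one]⟩
  · have htail : (equivPair i (equiv (p.tail.prod * of a))).head = 1 := by
      rw [equivPair_eq_of_fstIdx_ne fun h' =>
        ht (eq_empty_of_fstIdx_equiv_prod_mul_of p.fstIdx_ne h')]
    have hhead : (equivPair i (equiv (g * of a))).head = p.head := by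
      rw [← hg, mul_assoc, head_equivPair_equiv_of_mul, htail, mul_one]
    rw [← h.eq, head_equivPair_equiv_of_mul, mul_eq_right] at hhead
    exact absurd hhead ha

theorem centralizer_normalClosure_range_of_eq_bot {i j : ι} (hji : j ≠ i) [Nontrivial (G i)]
    [Nontrivial (G j)] :
    centralizer (normalClosure (Set.range (of : G i →* CoprodI G)) : Set (CoprodI G)) = ⊥ := by
  obtain ⟨a, ha⟩ := exists_ne (1 : G i)
  obtain ⟨b, hb⟩ := exists_ne (1 : G j)
  have haE : of a ∈ normalClosure (Set.range (of : G i →* CoprodI G)) :=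
    subset_normalClosure ⟨a, rfl⟩
  refine eq_bot_iff.mpr fun g hg => ?_
  rw [mem_centralizer_iff] at hg
  obtain ⟨x, rfl⟩ := mem_range_of_of_commute ha (hg _ haE)
  have hconj : Commute (of a) ((of b)⁻¹ * of x * of b) := by
    refine (Commute.conj_iff (of b)).mp ?_
    rw [show of b * ((of b)⁻¹ * of x * of b) * (of b)⁻¹ = of x by group]
    exact hg _ (normalClosure_normal.conj_mem _ haE (of b))
  obtain ⟨z, hz⟩ := mem_range_of_of_commute ha hconj
  rw [mem_bot, (map_eq_one_iff _ (of_injective i))]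
  by_contra hx
  exact of_mul_of_mul_of_notMem_range hji (inv_ne_one.mpr hb) hb hx ⟨z, by rw [hz, map_inv]⟩

theorem normalClosure_range_of_ne_top {i j : ι} (hji : j ≠ i) [Nontrivial (G j)] :
    normalClosure (Set.range (of : G i →* CoprodI G)) ≠ ⊤ := by
  classical
  intro htop
  obtain ⟨b, hb⟩ := exists_ne (1 : G j)
  let π : CoprodI G →* CoprodI G := lift fun l => if l = i then 1 else of
  have hle : normalClosure (Set.range (of : G i →* CoprodI G)) ≤ π.ker :=
    normalClosure_le_normal (by rintro _ ⟨x, rfl⟩; simp [π])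
  have hπb : π (of b) = 1 := hle (htop ▸ mem_top _)
  rw [show π (of b) = of b by simp [π, hji]] at hπb
  exact hb ((map_eq_one_iff _ (of_injective j)).mp hπb)

end Monoid.CoprodI

/-- If `Λ` has at least two elements and each `K λ` is a nontrivial group, then in the
free product `G = ∗_λ K_λ` the normal closure of (the canonical image of) each `K_λ`
is a proper essential subgroup of `G`. -/
theorem stmt4 {ι : Type*} [Nontrivial ι] (K : ι → Type*) [∀ i, Group (K i)]
    [∀ i, Nontrivial (K i)] (i : ι) :
    IsEssential (Subgroup.normalClosure
        (Set.range (Monoid.CoprodI.of : K i →* Monoid.CoprodI K))) ∧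
      Subgroup.normalClosure
        (Set.range (Monoid.CoprodI.of : K i →* Monoid.CoprodI K)) ≠ ⊤ := by
  obtain ⟨j, hji⟩ := exists_ne i
  exact ⟨.of_centralizer_eq_bot (Monoid.CoprodI.centralizer_normalClosure_range_of_eq_bot hji),
    Monoid.CoprodI.normalClosure_range_of_ne_top hji⟩
end

section
/- Let Λ be a nonempty finite index set and (G_λ)_{λ∈Λ} a family of groups, and let G = ∏_{λ∈Λ} G_λ be their direct product. Then G has a proper essential subgroup if and only if at least one G_λ has a proper essential subgroup. -/
/-!
Essentiality pulls back along surjective homomorphisms, and along injective ones that map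
normal subgroups to normal subgroups, such as the inclusions `G i → ∏ G`. Pulling back along
a projection turns a proper essential subgroup of a factor into one of the product.
Conversely, if `E` is essential in the product and no factor has a proper essential subgroup,
the pullback of `E` to each factor is everything, so `E` contains every factor and, the
family being finite, `E` is everything.
-/

namespace Subgroup

variable {G H : Type*} [Group G] [Group H]

theorem comap_inf_ne_bot_of_inf_map_ne_bot {f : G →* H} {E : Subgroup H} {N : Subgroup G}
    (h : E ⊓ N.map f ≠ ⊥) : E.comap f ⊓ N ≠ ⊥ := by
  intro hbot
  refine h (le_bot_iff.1 ?_)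
  calc E ⊓ N.map f ≤ (E.comap f ⊓ N).map f := by
        rintro _ ⟨hy, n, hn, rfl⟩
        exact ⟨n, ⟨hy, hn⟩, rfl⟩
    _ = ⊥ := by rw [hbot, map_bot]

theorem comap_ne_top_of_surjective {f : G →* H} (hf : Function.Surjective f) {E : Subgroup H}
    (hE : E ≠ ⊤) : E.comap f ≠ ⊤ := by
  intro htop
  refine hE (eq_top_iff.2 fun y _ => ?_)
  obtain ⟨x, rfl⟩ := hf y
  exact mem_comap.1 (htop ▸ mem_top x)

theorem Normal.map_mulSingle {ι : Type*} [DecidableEq ι] {G : ι → Type*} [∀ i, Group (G i)]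
    {i : ι} {N : Subgroup (G i)} (hN : N.Normal) : (N.map (MonoidHom.mulSingle G i)).Normal := by
  constructor
  rintro _ ⟨n, hn, rfl⟩ g
  refine ⟨g i * n * (g i)⁻¹, hN.conj_mem n hn (g i), ?_⟩
  ext j
  rcases eq_or_ne j i with rfl | hj
  · simp
  · simp [Pi.mulSingle_eq_of_ne hj]

theorem eq_top_of_comap_mulSingle_eq_top {ι : Type*} [Finite ι] {G : ι → Type*}
    [∀ i, Group (G i)] [DecidableEq ι] {E : Subgroup (∀ i, G i)}
    (h : ∀ i, E.comap (MonoidHom.mulSingle G i) = ⊤) : E = ⊤ :=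
  eq_top_iff.2 <| (pi_top (f := G) Set.univ).ge.trans <|
    pi_le_iff.2 fun i => map_le_iff_le_comap.2 (h i).ge

end Subgroup

namespace IsEssential

variable {G H : Type*} [Group G] [Group H] {E : Subgroup H}

theorem comap_of_surjective {f : G →* H} (hf : Function.Surjective f) (hE : IsEssential E) :
    IsEssential (E.comap f) := by
  refine ⟨hE.1.comap f, fun N hN hNbot => ?_⟩
  by_cases hmap : N.map f = ⊥
  · have hle : N ≤ E.comap f := fun n hn =>
      (Subgroup.mem_comap.2 <| (Subgroup.map_eq_bot_iff N).1 hmap hn ▸ E.one_mem)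
    rwa [inf_eq_right.2 hle]
  · exact Subgroup.comap_inf_ne_bot_of_inf_map_ne_bot (hE.2 _ (hN.map f hf) hmap)

theorem comap_of_injective {f : G →* H} (hf : Function.Injective f)
    (hnormal : ∀ N : Subgroup G, N.Normal → (N.map f).Normal) (hE : IsEssential E) :
    IsEssential (E.comap f) :=
  ⟨hE.1.comap f, fun N hN hNbot => Subgroup.comap_inf_ne_bot_of_inf_map_ne_bot <|
    hE.2 _ (hnormal N hN) ((Subgroup.map_eq_bot_iff_of_injective N hf).not.2 hNbot)⟩

end IsEssential

theorem stmt5_general {ι : Type*} [Finite ι] (G : ι → Type*) [∀ i, Group (G i)] :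
    (∃ E : Subgroup (∀ i, G i), IsEssential E ∧ E ≠ ⊤) ↔
      ∃ i, ∃ E : Subgroup (G i), IsEssential E ∧ E ≠ ⊤ := by
  classical
  constructor
  · rintro ⟨E, hE, hne⟩
    by_contra! h
    exact hne <| Subgroup.eq_top_of_comap_mulSingle_eq_top fun i =>
      h i _ <| hE.comap_of_injective (Pi.mulSingle_injective i) fun _ hN => hN.map_mulSingle
  · rintro ⟨i, E, hE, hne⟩
    have hsurj : Function.Surjective (Pi.evalMonoidHom G i) := Function.surjective_eval i
    exact ⟨E.comap (Pi.evalMonoidHom G i), hE.comap_of_surjective hsurj,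
      Subgroup.comap_ne_top_of_surjective hsurj hne⟩

/-- The direct product of a nonempty finite family of groups has a proper essential
subgroup if and only if at least one of the factors has a proper essential subgroup. -/
theorem stmt5 {ι : Type*} [Finite ι] [Nonempty ι] (G : ι → Type*) [∀ i, Group (G i)] :
    (∃ E : Subgroup (∀ i, G i), IsEssential E ∧ E ≠ ⊤) ↔
      ∃ i, ∃ E : Subgroup (G i), IsEssential E ∧ E ≠ ⊤ :=
  stmt5_general G
end

section
/- Let G be a nontrivial group. Then soc(G) = e(G) if and only if soc(G) is an essential subgroup of the group e(G) (where soc(G), which is always contained in e(G), is viewed as a subgroup of the group e(G)). -/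
/-- `essCore G` (denoted `e(G)`) is the intersection of all essential subgroups of `G`. -/
def essCore (G : Type*) [Group G] : Subgroup G :=
  sInf {E : Subgroup G | IsEssential E}

/-- A *minimal normal subgroup* of `G` is a nontrivial normal subgroup containing no
normal subgroup of `G` other than itself and the trivial one. -/
def IsMinNormal {G : Type*} [Group G] (N : Subgroup G) : Prop :=
  N.Normal ∧ N ≠ ⊥ ∧ ∀ M : Subgroup G, M.Normal → M ≤ N → M = ⊥ ∨ M = N

/-- The *socle* of `G` is the subgroup generated by all minimal normal subgroups of `G`. -/
def socle (G : Type*) [Group G] : Subgroup G :=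
  sSup {N : Subgroup G | IsMinNormal N}

namespace Subgroup

open scoped Pointwise

variable {G : Type*} [Group G]

theorem normal_sSup {S : Set (Subgroup G)} (h : ∀ N ∈ S, N.Normal) : (sSup S).Normal where
  conj_mem x hx g := by
    have : sSup S ≤ (sSup S).comap (MulAut.conj g).toMonoidHom :=
      sSup_le fun N hN n hn => le_sSup hN ((h N hN).conj_mem n hn g)
    exact this hx

theorem normal_sInf {S : Set (Subgroup G)} (h : ∀ N ∈ S, N.Normal) : (sInf S).Normal where
  conj_mem x hx g := mem_sInf.mpr fun N hN => (h N hN).conj_mem x (mem_sInf.mp hx N hN) g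

theorem sup_inf_assoc_of_le_of_normal {A C : Subgroup G} (B : Subgroup G) [B.Normal]
    (h : A ≤ C) : (A ⊔ B) ⊓ C = A ⊔ B ⊓ C := by
  refine le_antisymm ?_ (le_inf (sup_le_sup_left inf_le_left A) (sup_le h inf_le_right))
  rintro x ⟨hxAB, hxC⟩
  obtain ⟨a, ha, b, hb, rfl⟩ : x ∈ (A : Set G) * (B : Set G) := mul_normal A B ▸ hxAB
  have hbC : b ∈ C := by simpa using C.mul_mem (C.inv_mem (h ha)) hxC
  exact mul_mem_sup ha ⟨hb, hbC⟩

end Subgroup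

section Essential

variable {G : Type*} [Group G]

theorem isEssential_top : IsEssential (⊤ : Subgroup G) :=
  ⟨Subgroup.normal_top, fun N _ hN => by rwa [top_inf_eq]⟩

theorem IsMinNormal.le_of_isEssential {N E : Subgroup G} (hN : IsMinNormal N)
    (hE : IsEssential E) : N ≤ E := by
  obtain ⟨hNnormal, hNbot, hNmin⟩ := hN
  have := hE.1
  rcases hNmin (E ⊓ N) (Subgroup.normal_inf_normal E N) inf_le_right with h | h
  · exact absurd h (hE.2 N hNnormal hNbot)
  · exact h ▸ inf_le_left

theorem socle_normal : (socle G).Normal :=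
  Subgroup.normal_sSup fun _ hN => hN.1

theorem essCore_normal : (essCore G).Normal :=
  Subgroup.normal_sInf fun _ hE => hE.1

theorem socle_le_essCore : socle G ≤ essCore G :=
  sSup_le fun _ hN => le_sInf fun _ hE => hN.le_of_isEssential hE

theorem exists_maximal_normal_disjoint (S : Subgroup G) :
    ∃ M : Subgroup G, Maximal (fun K => K.Normal ∧ Disjoint K S) M := by
  refine zorn_le₀ _ fun c hcS hc => ?_
  rcases c.eq_empty_or_nonempty with rfl | hne
  · exact ⟨⊥, ⟨Subgroup.normal_bot, disjoint_bot_left⟩, by simp⟩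
  refine ⟨sSup c, ⟨Subgroup.normal_sSup fun N hN => (hcS hN).1, ?_⟩, fun _ => le_sSup⟩
  rw [Subgroup.disjoint_def]
  intro x hxc hxS
  obtain ⟨K, hK, hxK⟩ := (Subgroup.mem_sSup_of_directedOn hne hc.directedOn).mp hxc
  exact Subgroup.disjoint_def.mp (hcS hK).2 hxK hxS

theorem isEssential_sup_of_maximal {S M : Subgroup G} [S.Normal]
    (hM : Maximal (fun K => K.Normal ∧ Disjoint K S) M) : IsEssential (S ⊔ M) := by
  have := hM.1.1
  refine ⟨Subgroup.sup_normal S M, fun K hK hKbot hSMK => hKbot ?_⟩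
  have hMK : M ⊔ K ⊓ (S ⊔ M) = M := by rw [inf_comm, hSMK, sup_bot_eq]
  have hdisj : Disjoint (M ⊔ K) S := disjoint_iff.mpr <| calc
    (M ⊔ K) ⊓ S = (M ⊔ K) ⊓ (S ⊔ M) ⊓ S := by
      rw [inf_assoc, inf_eq_right.mpr (le_sup_left : S ≤ S ⊔ M)]
    _ = M ⊓ S := by rw [Subgroup.sup_inf_assoc_of_le_of_normal K le_sup_right, hMK]
    _ = ⊥ := hM.1.2.eq_bot
  have hKM : K ≤ M := le_sup_right.trans (hM.2 ⟨Subgroup.sup_normal M K, hdisj⟩ le_sup_left)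
  rw [← hSMK, inf_eq_right.mpr (hKM.trans le_sup_right)]

theorem IsEssential.eq_bot_of_disjoint_of_le {S E N : Subgroup G}
    (h : IsEssential (S.subgroupOf E)) (hN : N.Normal) (hNE : N ≤ E) (hSN : Disjoint S N) :
    N = ⊥ := by
  by_contra hNbot
  refine h.2 (N.subgroupOf E) (hN.subgroupOf E) (fun hbot => hNbot ?_) ?_
  · exact (Subgroup.subgroupOf_eq_bot.mp hbot).eq_bot_of_le hNE
  · rw [← Subgroup.bot_subgroupOf, ← hSN.eq_bot]
    exact (Subgroup.comap_inf S N E.subtype).symm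

theorem eq_essCore_of_isEssential_subgroupOf {S : Subgroup G} [S.Normal] (hSE : S ≤ essCore G)
    (hS : IsEssential (S.subgroupOf (essCore G))) : S = essCore G := by
  obtain ⟨M, hM⟩ := exists_maximal_normal_disjoint S
  have := hM.1.1
  have := essCore_normal (G := G)
  have hle : essCore G ≤ S ⊔ M := sInf_le (isEssential_sup_of_maximal hM)
  have hEM : essCore G ⊓ M = ⊥ :=
    hS.eq_bot_of_disjoint_of_le (Subgroup.normal_inf_normal _ _) inf_le_left
      (hM.1.2.symm.mono_right inf_le_right)
  calc S = S ⊔ essCore G ⊓ M := by rw [hEM, sup_bot_eq]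
    _ = (S ⊔ M) ⊓ essCore G := by rw [inf_comm, Subgroup.sup_inf_assoc_of_le_of_normal M hSE]
    _ = essCore G := inf_eq_right.mpr hle

end Essential

theorem stmt7_general {G : Type*} [Group G] :
    socle G = essCore G ↔ IsEssential ((socle G).subgroupOf (essCore G)) := by
  have := socle_normal (G := G)
  constructor
  · intro h
    rw [h, Subgroup.subgroupOf_self]
    exact isEssential_top
  · exact eq_essCore_of_isEssential_subgroupOf socle_le_essCore

/-- For a nontrivial group `G`, `soc(G) = e(G)` iff `soc(G)` is an essential subgroup of
the group `e(G)`. -/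
theorem stmt7 {G : Type*} [Group G] [Nontrivial G] :
    socle G = essCore G ↔ IsEssential ((socle G).subgroupOf (essCore G)) :=
  stmt7_general
end

section
/- Let G be a nontrivial group. Then G contains no proper essential subgroup if and only if every normal subgroup N of G is a direct summand of G, i.e., for every normal subgroup N of G there exists a normal subgroup T of G with N ∩ T = {1} and NT = G. -/
namespace Subgroup

open scoped Pointwise

variable {G : Type*} [Group G]

theorem normal_sSup_of_directedOn {c : Set (Subgroup G)} (hne : c.Nonempty)
    (hc : DirectedOn (· ≤ ·) c) (hnormal : ∀ H ∈ c, H.Normal) : (sSup c).Normal where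
  conj_mem n hn g := by
    obtain ⟨H, hHc, hnH⟩ := (mem_sSup_of_directedOn hne hc).1 hn
    exact (mem_sSup_of_directedOn hne hc).2 ⟨H, hHc, (hnormal H hHc).conj_mem n hnH g⟩

theorem inf_sSup_eq_bot_of_directedOn {N : Subgroup G} {c : Set (Subgroup G)}
    (hne : c.Nonempty) (hc : DirectedOn (· ≤ ·) c) (hdisj : ∀ H ∈ c, N ⊓ H = ⊥) :
    N ⊓ sSup c = ⊥ := by
  refine eq_bot_iff.2 fun x ⟨hxN, hxc⟩ => ?_
  obtain ⟨H, hHc, hxH⟩ := (mem_sSup_of_directedOn hne hc).1 hxc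
  exact hdisj H hHc ▸ mem_inf.2 ⟨hxN, hxH⟩

theorem exists_maximal_normal_inf_eq_bot (N : Subgroup G) :
    ∃ T, Maximal (fun T : Subgroup G => T.Normal ∧ N ⊓ T = ⊥) T := by
  obtain ⟨T, -, hT⟩ := zorn_le_nonempty₀ {T : Subgroup G | T.Normal ∧ N ⊓ T = ⊥}
    (fun c hcs hc H hH =>
      ⟨sSup c,
        ⟨normal_sSup_of_directedOn ⟨H, hH⟩ hc.directedOn fun K hK => (hcs hK).1,
          inf_sSup_eq_bot_of_directedOn ⟨H, hH⟩ hc.directedOn fun K hK => (hcs hK).2⟩,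
        fun _ => le_sSup⟩)
    ⊥ ⟨inferInstance, inf_bot_eq N⟩
  exact ⟨T, hT⟩

theorem sup_inf_assoc_of_le_of_normal_s9 {T X : Subgroup G} (K : Subgroup G) [K.Normal]
    (h : T ≤ X) : (T ⊔ K) ⊓ X = T ⊔ K ⊓ X := by
  refine le_antisymm (fun x hx => ?_)
    (le_inf (sup_le_sup_left inf_le_left T) (sup_le h inf_le_right))
  have hx' : x ∈ (T : Set G) * (K : Set G) ∩ (X : Set G) := ⟨mul_normal T K ▸ hx.1, hx.2⟩
  rw [← mul_inf_assoc T K X h] at hx'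
  obtain ⟨t, ht, k, hk, rfl⟩ := hx'
  exact mul_mem_sup ht hk

theorem inf_sup_eq_bot_of_sup_inf_eq_bot {N T K : Subgroup G} [K.Normal] (hNT : N ⊓ T = ⊥)
    (hK : (N ⊔ T) ⊓ K = ⊥) : N ⊓ (T ⊔ K) = ⊥ := by
  have hle : (T ⊔ K) ⊓ (N ⊔ T) ≤ T := by
    rw [sup_inf_assoc_of_le_of_normal_s9 K le_sup_right, inf_comm K, hK, sup_bot_eq]
  rw [eq_bot_iff, ← hNT]
  calc N ⊓ (T ⊔ K) ≤ N ⊓ ((T ⊔ K) ⊓ (N ⊔ T)) :=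
        le_inf inf_le_left (le_inf inf_le_right (inf_le_left.trans le_sup_left))
    _ ≤ N ⊓ T := inf_le_inf_left N hle

end Subgroup

theorem isEssential_sup_of_maximal_s9 {G : Type*} [Group G] {N T : Subgroup G} [N.Normal]
    (hT : Maximal (fun T : Subgroup G => T.Normal ∧ N ⊓ T = ⊥) T) :
    IsEssential (N ⊔ T) := by
  have := hT.prop.1
  refine ⟨Subgroup.sup_normal N T, fun K hK hKne hNTK => hKne (eq_bot_iff.2 ?_)⟩
  have := hK
  have hTK : T ⊔ K ≤ T :=
    hT.2 ⟨Subgroup.sup_normal T K, Subgroup.inf_sup_eq_bot_of_sup_inf_eq_bot hT.prop.2 hNTK⟩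
      le_sup_left
  calc K ≤ (N ⊔ T) ⊓ K := le_inf ((le_sup_right.trans hTK).trans le_sup_right) le_rfl
    _ = ⊥ := hNTK

theorem IsEssential.eq_bot_of_inf_eq_bot {G : Type*} [Group G] {E T : Subgroup G}
    (hE : IsEssential E) (hT : T.Normal) (h : E ⊓ T = ⊥) : T = ⊥ :=
  by_contra fun hne => hE.2 T hT hne h

theorem stmt9_general {G : Type*} [Group G] :
    (¬ ∃ E : Subgroup G, IsEssential E ∧ E ≠ ⊤) ↔
      ∀ N : Subgroup G, N.Normal →
        ∃ T : Subgroup G, T.Normal ∧ N ⊓ T = ⊥ ∧ N ⊔ T = ⊤ := by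
  constructor
  · intro h N hN
    obtain ⟨T, hT⟩ := N.exists_maximal_normal_inf_eq_bot
    exact ⟨T, hT.prop.1, hT.prop.2,
      by_contra fun hne => h ⟨_, isEssential_sup_of_maximal_s9 hT, hne⟩⟩
  · rintro h ⟨E, hE, hEtop⟩
    obtain ⟨T, hT, hinf, hsup⟩ := h E hE.1
    rw [hE.eq_bot_of_inf_eq_bot hT hinf, sup_bot_eq] at hsup
    exact hEtop hsup

/-- A nontrivial group `G` contains no proper essential subgroup iff every normal
subgroup of `G` is a direct summand of `G`. -/
theorem stmt9 {G : Type*} [Group G] [Nontrivial G] :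
    (¬ ∃ E : Subgroup G, IsEssential E ∧ E ≠ ⊤) ↔
      ∀ N : Subgroup G, N.Normal →
        ∃ T : Subgroup G, T.Normal ∧ N ⊓ T = ⊥ ∧ N ⊔ T = ⊤ :=
  stmt9_general
end

section
/- Let G be a nontrivial group. Then G contains no proper essential subgroup if and only if every nontrivial normal subgroup N of G, regarded as a group in its own right, contains no proper essential subgroup. -/
/-!
Let `B` be a normal subgroup maximal with `B ∩ N = 1` (Zorn). If `E ≤ N` is normal in `G` and
meets every nontrivial normal subgroup of `G` lying in `N`, then `EB` is essential in `G`: a normal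
`C` with `C ∩ EB = 1` is either inside `B` or, by maximality, `CB ∩ N ≠ 1`, and an element of
`E ∩ CB` then lies in `B ∩ N = 1`. With `E = N` this shows that `NB` is essential, so `NB = G`
when `G` has no proper essential subgroup. Then `B` centralises `N`, every normal subgroup of `N`
is normal in `G`, and a proper essential subgroup `E` of `N` yields the proper essential
subgroup `EB` of `G`. The converse direction is the case `N = G`.
-/

namespace Subgroup

variable {G : Type*} [Group G]

lemma exists_maximal_normal_disjoint (N : Subgroup G) :
    ∃ B : Subgroup G, Maximal (fun B : Subgroup G => B.Normal ∧ Disjoint B N) B := by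
  obtain ⟨B, -, hB⟩ := zorn_le_nonempty₀ {B : Subgroup G | B.Normal ∧ Disjoint B N}
    (fun c hc hchain B hB => ⟨sSup c, ⟨sSup_normal c fun H hH => (hc hH).1, disjoint_def.mpr
      fun hxc hxN => by
        obtain ⟨H, hH, hxH⟩ := (mem_sSup_of_directedOn ⟨B, hB⟩ hchain.directedOn).mp hxc
        exact disjoint_def.mp (hc hH).2 hxH hxN⟩, fun _ => le_sSup⟩)
    ⊥ ⟨inferInstance, disjoint_bot_left⟩
  exact ⟨B, hB⟩

lemma isEssential_sup_of_maximal_disjoint {N B E : Subgroup G} [N.Normal]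
    (hB : Maximal (fun B : Subgroup G => B.Normal ∧ Disjoint B N) B) [E.Normal]
    (hE : ∀ Q : Subgroup G, Q.Normal → Q ≤ N → Q ≠ ⊥ → E ⊓ Q ≠ ⊥) :
    IsEssential (E ⊔ B) := by
  obtain ⟨hBn, hBN⟩ := hB.prop
  refine ⟨inferInstance, fun C hC hCbot hEC => ?_⟩
  by_cases hCB : C ≤ B
  · exact hCbot (by rwa [inf_eq_right.mpr (hCB.trans le_sup_right)] at hEC)
  have hQ : (B ⊔ C) ⊓ N ≠ ⊥ := fun h =>
    hB.not_prop_of_gt (left_lt_sup.mpr hCB) ⟨inferInstance, disjoint_iff.mpr h⟩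
  apply hE _ inferInstance inf_le_right hQ
  rw [eq_bot_iff_forall]
  rintro x ⟨hxE, hxBC, hxN⟩
  obtain ⟨b, hb, c, hc, rfl⟩ := mem_sup_of_normal_right.mp hxBC
  have hcEB : c ∈ E ⊔ B := by
    simpa using mul_mem (mem_sup_right (inv_mem hb)) (mem_sup_left hxE : b * c ∈ E ⊔ B)
  obtain rfl : c = 1 := (eq_bot_iff_forall _).mp hEC c ⟨hcEB, hc⟩
  rw [mul_one] at hxN ⊢
  exact disjoint_def.mp hBN hb hxN

lemma sup_inf_eq_of_disjoint {N B E : Subgroup G} [B.Normal] (hEN : E ≤ N)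
    (hBN : Disjoint B N) : (E ⊔ B) ⊓ N = E := by
  refine le_antisymm ?_ (le_inf le_sup_left hEN)
  rintro x ⟨hxEB, hxN⟩
  obtain ⟨e, he, b, hb, rfl⟩ := mem_sup_of_normal_right.mp hxEB
  obtain rfl : b = 1 :=
    disjoint_def.mp hBN hb (by simpa using mul_mem (inv_mem (hEN he)) hxN)
  simpa using he

-- `B` centralises `N`, so conjugation by `G = NB` is conjugation by `N`.
lemma normal_map_subtype_of_sup_eq_top {N B : Subgroup G} [hN : N.Normal] [hB : B.Normal]
    (hBN : Disjoint B N) (hNB : N ⊔ B = ⊤) (K : Subgroup N) [K.Normal] :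
    (K.map N.subtype).Normal := by
  rw [← normalizer_eq_top_iff, eq_top_iff, ← hNB]
  refine sup_le ?_ (le_trans ?_ (centralizer_le_normalizer _))
  · rwa [← normal_subgroupOf_iff_le_normalizer (map_subtype_le K), subgroupOf,
      comap_map_eq_self_of_injective N.subtype_injective]
  · rintro b hb _ ⟨k, -, rfl⟩
    exact (commute_of_normal_of_disjoint N B hN hB hBN.symm _ _ k.2 hb).eq

end Subgroup

open Subgroup

section

variable {G : Type*} [Group G]

lemma IsEssential.map_mulEquiv {H : Type*} [Group H] {E : Subgroup G} (hE : IsEssential E)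
    (e : G ≃* H) : IsEssential (E.map (e : G →* H)) := by
  refine ⟨hE.1.map _ e.surjective, fun N hN hNbot hEN => ?_⟩
  have hsurj : Function.Surjective (e : G →* H) := e.surjective
  have hinj : Function.Injective (e : G →* H) := e.injective
  have hcomap : N.comap (e : G →* H) ≠ ⊥ := fun h => hNbot <| by
    rw [← map_comap_eq_self_of_surjective hsurj N, h, Subgroup.map_bot]
  apply hE.2 _ (hN.comap _) hcomap
  rw [← map_eq_bot_iff_of_injective _ hinj, map_inf _ _ _ hinj,
    map_comap_eq_self_of_surjective hsurj, hEN]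

lemma IsEssential.map_subtype_inf_ne_bot {N : Subgroup G} {E : Subgroup N} (hE : IsEssential E)
    {Q : Subgroup G} (hQ : Q.Normal) (hQN : Q ≤ N) (hQbot : Q ≠ ⊥) :
    E.map N.subtype ⊓ Q ≠ ⊥ := by
  have hQ' : Q.subgroupOf N ≠ ⊥ := by
    rwa [Ne, subgroupOf_eq_bot, disjoint_of_le_iff_left_eq_bot hQN]
  refine fun h => hE.2 _ (hQ.subgroupOf N) hQ' ?_
  rwa [← map_eq_bot_iff_of_injective _ N.subtype_injective, map_inf _ _ _ N.subtype_injective,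
    subgroupOf_map_subtype, inf_eq_left.mpr hQN]

end

/-- A nontrivial group `G` contains no proper essential subgroup iff every nontrivial
normal subgroup of `G`, regarded as a group in its own right, contains no proper
essential subgroup. -/
theorem stmt10 {G : Type*} [Group G] [Nontrivial G] :
    (¬ ∃ E : Subgroup G, IsEssential E ∧ E ≠ ⊤) ↔
      ∀ N : Subgroup G, N.Normal → N ≠ ⊥ →
        ¬ ∃ E : Subgroup ↥N, IsEssential E ∧ E ≠ ⊤ := by
  constructor
  · rintro hG N hN - ⟨E, hE, hEtop⟩
    obtain ⟨B, hB⟩ := N.exists_maximal_normal_disjoint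
    obtain ⟨hBn, hBN⟩ := hB.prop
    have hNB : N ⊔ B = ⊤ := by
      by_contra h
      exact hG ⟨N ⊔ B, isEssential_sup_of_maximal_disjoint hB fun Q _ hQN hQ => by
        rwa [inf_eq_right.mpr hQN], h⟩
    have := hE.1
    have := normal_map_subtype_of_sup_eq_top hBN hNB E
    refine hG ⟨E.map N.subtype ⊔ B, isEssential_sup_of_maximal_disjoint hB
      fun Q hQ hQN hQbot => hE.map_subtype_inf_ne_bot hQ hQN hQbot, fun h => hEtop ?_⟩
    have hEN := sup_inf_eq_of_disjoint (map_subtype_le E) hBN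
    rw [h, top_inf_eq] at hEN
    rw [eq_top_iff, ← map_subtype_le_map_subtype, ← hEN]
    exact map_subtype_le ⊤
  · rintro h ⟨E, hE, hEtop⟩
    refine h ⊤ inferInstance top_ne_bot ⟨_, hE.map_mulEquiv topEquiv.symm, ?_⟩
    rwa [Ne, ← map_equiv_top topEquiv.symm, (map_injective topEquiv.symm.injective).eq_iff]
end

section
/- Let G be a nontrivial group. Then G contains no proper essential subgroup if and only if for every proper normal subgroup N of G and every normal subgroup A of G containing N, there exists a normal subgroup B of G containing N such that G = AB and A ∩ B = N. -/
namespace Subgroup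

variable {G : Type*} [Group G]

theorem exists_le_maximal_normal_inf_le (A N : Subgroup G) [hN : N.Normal] :
    ∃ B, N ≤ B ∧ Maximal (fun B : Subgroup G ↦ B.Normal ∧ A ⊓ B ≤ N) B := by
  refine zorn_le_nonempty₀ _ (fun c hc hchain K hK ↦ ?_) N ⟨hN, inf_le_right⟩
  refine ⟨sSup c, ⟨sSup_normal c fun B hB ↦ (hc hB).1, ?_⟩, fun _ ↦ le_sSup⟩
  rintro x ⟨hxA, hx⟩
  obtain ⟨B, hB, hxB⟩ := (mem_sSup_of_directedOn ⟨K, hK⟩ hchain.directedOn).mp hx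
  exact (hc hB).2 ⟨hxA, hxB⟩

theorem inf_sup_eq_of_inf_eq_bot {X B M : Subgroup G} [M.Normal] (hBX : B ≤ X)
    (hXM : X ⊓ M = ⊥) : X ⊓ (M ⊔ B) = B := by
  apply SetLike.coe_injective
  rw [coe_inf, normal_mul, ← inf_mul_assoc X M B hBX, hXM, coe_bot]
  simp

theorem exists_normal_inf_eq_bot_of_not_isEssential {E : Subgroup G} (hE : E.Normal)
    (h : ¬IsEssential E) : ∃ M : Subgroup G, M.Normal ∧ M ≠ ⊥ ∧ E ⊓ M = ⊥ := by
  simpa [IsEssential, hE] using h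

theorem exists_normal_sup_eq_top_inf_eq (h : ∀ E : Subgroup G, IsEssential E → E = ⊤)
    {N A : Subgroup G} (hN : N.Normal) (hA : A.Normal) (hNA : N ≤ A) :
    ∃ B : Subgroup G, B.Normal ∧ N ≤ B ∧ A ⊔ B = ⊤ ∧ A ⊓ B = N := by
  obtain ⟨B, hNB, ⟨hB, hAB⟩, hmax⟩ := exists_le_maximal_normal_inf_le A N
  refine ⟨B, hB, hNB, ?_, le_antisymm hAB (le_inf hNA hNB)⟩
  by_contra hsup
  obtain ⟨M, hM, hM_ne, hABM⟩ := exists_normal_inf_eq_bot_of_not_isEssential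
    (sup_normal A B) (fun hE ↦ hsup (h _ hE))
  have hMB_normal : (M ⊔ B).Normal := sup_normal M B
  have hAMB : A ⊓ (M ⊔ B) ≤ N := calc
    A ⊓ (M ⊔ B) = A ⊓ ((A ⊔ B) ⊓ (M ⊔ B)) := by rw [← inf_assoc, inf_sup_self]
    _ = A ⊓ B := by rw [inf_sup_eq_of_inf_eq_bot le_sup_right hABM]
    _ ≤ N := hAB
  have hMB : M ≤ B := le_sup_left.trans (hmax ⟨hMB_normal, hAMB⟩ le_sup_right)
  exact hM_ne (by rw [← hABM, inf_eq_right.mpr (hMB.trans le_sup_right)])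

end Subgroup

open Subgroup in
/-- A nontrivial group `G` contains no proper essential subgroup iff for every proper
normal subgroup `N` of `G` and every normal subgroup `A ⊇ N`, there is a normal
subgroup `B ⊇ N` with `G = AB` and `A ∩ B = N`. -/
theorem stmt11 {G : Type*} [Group G] [Nontrivial G] :
    (¬ ∃ E : Subgroup G, IsEssential E ∧ E ≠ ⊤) ↔
      ∀ N : Subgroup G, N.Normal → N ≠ ⊤ →
        ∀ A : Subgroup G, A.Normal → N ≤ A →
          ∃ B : Subgroup G, B.Normal ∧ N ≤ B ∧ A ⊔ B = ⊤ ∧ A ⊓ B = N := by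
  constructor
  · intro h N hN _ A hA hNA
    exact exists_normal_sup_eq_top_inf_eq (fun E hE ↦ by_contra fun hE_top ↦ h ⟨E, hE, hE_top⟩)
      hN hA hNA
  · rintro h ⟨E, ⟨hE, hE_ess⟩, hE_top⟩
    obtain ⟨B, hB, -, hsup, hinf⟩ := h ⊥ normal_bot bot_ne_top E hE bot_le
    refine hE_ess B hB ?_ hinf
    rintro rfl
    exact hE_top (by simpa using hsup)
end

section
/- Let N and H be groups and φ : H → Aut(N) a homomorphism, and let G = N ⋊_φ H be the corresponding semidirect product. If H has a proper essential subgroup E, then G has a proper essential subgroup; in fact N ⋊_φ E is a proper essential subgroup of G. -/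
/-!
A nontrivial normal subgroup `K` of `N ⋊ H` either meets the kernel `N` of the projection to `H`
nontrivially, and then meets `N ⋊ E ⊇ N` nontrivially, or it maps injectively to a nontrivial
normal subgroup of `H`, which meets `E`; pulling such an element back gives a nontrivial element
of `K ∩ (N ⋊ E)`. This works for the preimage of an essential subgroup under any surjection.
-/

namespace Subgroup

variable {G H : Type*} [Group G] [Group H]

theorem map_comap_inf (f : G →* H) (E : Subgroup H) (K : Subgroup G) :
    (E.comap f ⊓ K).map f = E ⊓ K.map f :=
  SetLike.coe_injective <| by
    simp only [coe_map, coe_inf, coe_comap, Set.inter_comm _ (K : Set G), Set.image_inter_preimage,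
      Set.inter_comm (E : Set H)]

theorem map_ne_bot_of_inf_ker_eq_bot {f : G →* H} {K : Subgroup G} (hK : K ≠ ⊥)
    (hker : K ⊓ f.ker = ⊥) : K.map f ≠ ⊥ := by
  rw [Ne, map_eq_bot_iff]
  intro hle
  exact hK (inf_eq_left.mpr hle ▸ hker)

end Subgroup

theorem IsEssential.comap_of_surjective_s13 {G H : Type*} [Group G] [Group H] {f : G →* H}
    (hf : Function.Surjective f) {E : Subgroup H} (hE : IsEssential E) :
    IsEssential (E.comap f) := by
  refine ⟨hE.1.comap f, fun K hK hK_ne => ?_⟩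
  by_cases hker : K ⊓ f.ker = ⊥
  · have hmeet : E ⊓ K.map f ≠ ⊥ :=
      hE.2 _ (hK.map f hf) (Subgroup.map_ne_bot_of_inf_ker_eq_bot hK_ne hker)
    rw [← Subgroup.map_comap_inf] at hmeet
    exact fun h => hmeet (h ▸ Subgroup.map_bot f)
  · exact ne_bot_of_le_ne_bot hker (le_inf (inf_le_right.trans (f.ker_le_comap E)) inf_le_left)

/-- If `E` is a proper essential subgroup of `H`, then `N ⋊ E` (the subgroup of the
semidirect product `N ⋊[φ] H` of elements whose `H`-component lies in `E`) is a proper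
essential subgroup of `N ⋊[φ] H`; in particular `N ⋊[φ] H` has a proper essential
subgroup. -/
theorem stmt13 {N H : Type*} [Group N] [Group H] (φ : H →* MulAut N)
    (E : Subgroup H) (hE : IsEssential E) (hEproper : E ≠ ⊤) :
    IsEssential (E.comap (SemidirectProduct.rightHom : N ⋊[φ] H →* H)) ∧
      E.comap (SemidirectProduct.rightHom : N ⋊[φ] H →* H) ≠ ⊤ := by
  have hsurj : Function.Surjective (SemidirectProduct.rightHom : N ⋊[φ] H →* H) :=
    SemidirectProduct.rightHom_surjective
  refine ⟨hE.comap_of_surjective_s13 hsurj, ?_⟩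
  rw [← Subgroup.comap_top SemidirectProduct.rightHom]
  exact (Subgroup.comap_injective hsurj).ne hEproper
end

section
/- Let N and H be abelian groups and φ : H → Aut(N) a homomorphism such that the action of H on N is nontrivial (i.e., there exist h ∈ H and n ∈ N with φ(h)(n) ≠ n). Then the semidirect product G = N ⋊_φ H contains a proper essential subgroup. -/
theorem Subgroup.isEssential_of_centralizer_le {G : Type*} [Group G] {E : Subgroup G}
    [hE : E.Normal] (hcent : Subgroup.centralizer (E : Set G) ≤ E) : IsEssential E := by
  refine ⟨hE, fun M hM hMne hEM => hMne ?_⟩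
  have hdisj : Disjoint M E := disjoint_iff.mpr (inf_comm E M ▸ hEM)
  have hMcent : M ≤ Subgroup.centralizer (E : Set G) := fun x hx =>
    Subgroup.mem_centralizer_iff.mpr fun y hy =>
      (Subgroup.commute_of_normal_of_disjoint M E hM hE hdisj x y hx hy).symm.eq
  exact eq_bot_iff.mpr fun x hx => hEM ▸ ⟨hcent (hMcent hx), hx⟩

namespace SemidirectProduct

variable {N G : Type*} [Group G]

theorem range_inl_le_ker_comp_rightHom [Group N] (φ : G →* MulAut N) :
    (inl.range : Subgroup (N ⋊[φ] G)) ≤ (φ.comp rightHom).ker := by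
  rintro _ ⟨n, rfl⟩
  simp

theorem inr_mem_ker_comp_rightHom_iff [Group N] (φ : G →* MulAut N) (g : G) :
    (inr g : N ⋊[φ] G) ∈ (φ.comp rightHom).ker ↔ φ g = 1 := by
  simp

theorem centralizer_range_inl_le_ker_comp_rightHom [CommGroup N] (φ : G →* MulAut N) :
    Subgroup.centralizer ((inl.range : Subgroup (N ⋊[φ] G)) : Set (N ⋊[φ] G)) ≤
      (φ.comp rightHom).ker := by
  intro x hx
  rw [MonoidHom.mem_ker]
  ext n
  have hcomm := congrArg left (Subgroup.mem_centralizer_iff.mp hx (inl n) ⟨n, rfl⟩)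
  simp only [mul_left, left_inl, right_inl, map_one, MulAut.one_apply] at hcomm
  simpa [mul_comm n x.left] using hcomm.symm

end SemidirectProduct

open SemidirectProduct in
/-- If `N` and `H` are abelian groups and the action `φ` of `H` on `N` is nontrivial,
then the semidirect product `N ⋊[φ] H` contains a proper essential subgroup. -/
theorem stmt14 {N H : Type*} [CommGroup N] [CommGroup H] (φ : H →* MulAut N)
    (hnt : ∃ (h : H) (n : N), φ h n ≠ n) :
    ∃ E : Subgroup (N ⋊[φ] H), IsEssential E ∧ E ≠ ⊤ := by
  obtain ⟨h₀, n₀, hn₀⟩ := hnt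
  refine ⟨(φ.comp rightHom).ker, Subgroup.isEssential_of_centralizer_le ?_, fun htop => ?_⟩
  · exact (Subgroup.centralizer_le (range_inl_le_ker_comp_rightHom φ)).trans
      (centralizer_range_inl_le_ker_comp_rightHom φ)
  · have hφ : φ h₀ = 1 := (inr_mem_ker_comp_rightHom_iff φ h₀).mp (htop ▸ Subgroup.mem_top _)
    exact hn₀ (by rw [hφ]; rfl)
end

section
/- Let G be a nontrivial group. Then G does not have a proper essential extension (i.e., for every group Ḡ and every injective homomorphism φ : G → Ḡ such that φ(G) is an essential subgroup of Ḡ, one has φ(G) = Ḡ) if and only if G is a complete group. -/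
universe u

/-- A group is *complete* if its center is trivial and every automorphism is inner. -/
def IsCompleteGroup (G : Type*) [Group G] : Prop :=
  Subgroup.center G = ⊥ ∧ ∀ σ : MulAut G, ∃ g : G, σ = MulAut.conj g

/-!
If `G` is complete and normal in `Ḡ`, every `x ∈ Ḡ` acts on `G` as some inner automorphism
`conj g`, so `g⁻¹ x` centralizes `G`. The centralizer of `G` is normal and meets `G` in
`Z(G) = 1`; if `G` is essential it is therefore trivial, and `x = g ∈ G`.

Conversely, suppose `G` has no proper essential extension. If `Z(G) ≠ 1`, it contains a copy of
`ℤ/n` (`n ≠ 1`, with `ℤ/0 = ℤ`), and the central product of `G` with the Heisenberg group over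
`ℤ/n` is a proper essential extension: a normal subgroup `N` with `G ∩ N = 1` contains the
commutators of its elements with the Heisenberg generators; these lie in `G`, so they vanish,
which forces `N ≤ G`. Hence `Z(G) = 1` and `G ≅ Inn(G)` is normal in `Aut(G)`. It is essential
there: a normal subgroup meeting `Inn(G)` trivially commutes with it, and
`σ ∘ conj g ∘ σ⁻¹ = conj (σ g)` then forces `σ = 1`. So `Inn(G) = Aut(G)`.
-/

open Subgroup
open scoped commutatorElement

theorem isEssential_iff {G : Type*} [Group G] {E : Subgroup G} :
    IsEssential E ↔ E.Normal ∧ ∀ N : Subgroup G, N.Normal → Disjoint E N → N = ⊥ := by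
  simp only [IsEssential, disjoint_iff, not_imp_not]

theorem IsEssential.eq_bot_of_disjoint {G : Type*} [Group G] {E N : Subgroup G}
    (hE : IsEssential E) (hN : N.Normal) (hdisj : Disjoint E N) : N = ⊥ :=
  (isEssential_iff.mp hE).2 N hN hdisj

theorem commutatorElement_eq_of_mul_eq {G : Type*} [Group G] {a b z : G}
    (h : a * b = z * (b * a)) : ⁅a, b⁆ = z := by
  rw [commutatorElement_def, h]
  group

/-- The central product of `G` with the Heisenberg group over `R` along `ψ`: `(g, x, y)` stands
for `g` times the unitriangular matrix `!![1, x, 0; 0, 1, y; 0, 0, 1]`, and the matrix with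
corner `r` is identified with `ψ r`. -/
structure HeisenbergExtension {G : Type u} [Group G] {R : Type*} [Ring R]
    (ψ : Multiplicative R →* center G) where
  g : G
  x : R
  y : R

namespace HeisenbergExtension

variable {G : Type u} [Group G] {R : Type*} [Ring R] {ψ : Multiplicative R →* center G}

@[ext] lemma ext {p q : HeisenbergExtension ψ} (hg : p.g = q.g) (hx : p.x = q.x)
    (hy : p.y = q.y) : p = q := by
  cases p; cases q; simp_all

lemma mul_ψ_comm (r : R) (g : G) : g * ψ (.ofAdd r) = ψ (.ofAdd r) * g :=
  mem_center_iff.mp (ψ _).2 g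

instance : Group (HeisenbergExtension ψ) where
  mul p q := ⟨p.g * q.g * ψ (.ofAdd (p.x * q.y)), p.x + q.x, p.y + q.y⟩
  one := ⟨1, 0, 0⟩
  inv p := ⟨p.g⁻¹ * ψ (.ofAdd (p.x * p.y)), -p.x, -p.y⟩
  mul_assoc p q r := by
    refine ext ?_ (add_assoc ..) (add_assoc ..)
    show p.g * q.g * ψ (.ofAdd (p.x * q.y)) * r.g * ψ (.ofAdd ((p.x + q.x) * r.y)) =
      p.g * (q.g * r.g * ψ (.ofAdd (q.x * r.y))) * ψ (.ofAdd (p.x * (q.y + r.y)))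
    simp only [add_mul, mul_add, ofAdd_add, map_mul, mul_assoc, ← mul_ψ_comm (p.x * q.y) r.g]
    simp only [← coe_mul]
    rw [mul_comm' (ψ (.ofAdd (q.x * r.y))), mul_assoc]
  one_mul p := by
    refine ext ?_ (zero_add _) (zero_add _)
    show 1 * p.g * ψ (.ofAdd (0 * p.y)) = p.g
    simp
  mul_one p := by
    refine ext ?_ (add_zero _) (add_zero _)
    show p.g * 1 * ψ (.ofAdd (p.x * 0)) = p.g
    simp
  inv_mul_cancel p := by
    refine ext ?_ (neg_add_cancel _) (neg_add_cancel _)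
    show p.g⁻¹ * ψ (.ofAdd (p.x * p.y)) * p.g * ψ (.ofAdd (-p.x * p.y)) = 1
    rw [mul_assoc _ _ p.g, ← mul_ψ_comm, mul_assoc, mul_assoc, ← coe_mul, ← map_mul,
      ← ofAdd_add]
    simp

@[simp] lemma mul_g (p q : HeisenbergExtension ψ) :
    (p * q).g = p.g * q.g * ψ (.ofAdd (p.x * q.y)) := rfl
@[simp] lemma mul_x (p q : HeisenbergExtension ψ) : (p * q).x = p.x + q.x := rfl
@[simp] lemma mul_y (p q : HeisenbergExtension ψ) : (p * q).y = p.y + q.y := rfl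
@[simp] lemma inv_x (p : HeisenbergExtension ψ) : p⁻¹.x = -p.x := rfl
@[simp] lemma inv_y (p : HeisenbergExtension ψ) : p⁻¹.y = -p.y := rfl

variable (ψ) in
def inl : G →* HeisenbergExtension ψ where
  toFun g := ⟨g, 0, 0⟩
  map_one' := rfl
  map_mul' g h := ext (by simp) (add_zero 0).symm (add_zero 0).symm

@[simp] lemma inl_g (g : G) : (inl ψ g).g = g := rfl
@[simp] lemma inl_x (g : G) : (inl ψ g).x = 0 := rfl
@[simp] lemma inl_y (g : G) : (inl ψ g).y = 0 := rfl

lemma inl_injective : Function.Injective (inl ψ) :=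
  fun _ _ h => congrArg HeisenbergExtension.g h

lemma mem_range_inl {p : HeisenbergExtension ψ} : p ∈ (inl ψ).range ↔ p.x = 0 ∧ p.y = 0 := by
  refine ⟨?_, fun ⟨hx, hy⟩ => ⟨p.g, ext rfl hx.symm hy.symm⟩⟩
  rintro ⟨g, rfl⟩
  exact ⟨rfl, rfl⟩

lemma range_inl_ne_top [Nontrivial R] : (inl ψ).range ≠ ⊤ := fun h =>
  one_ne_zero (mem_range_inl.mp (h ▸ mem_top (⟨1, 1, 0⟩ : HeisenbergExtension ψ))).1

lemma mul_mk_one_zero_one (p : HeisenbergExtension ψ) :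
    p * ⟨1, 0, 1⟩ = inl ψ (ψ (.ofAdd p.x)) * (⟨1, 0, 1⟩ * p) := by
  ext <;> simp [mul_ψ_comm]
  exact add_comm _ _

lemma mk_one_one_zero_mul (p : HeisenbergExtension ψ) :
    ⟨1, 1, 0⟩ * p = inl ψ (ψ (.ofAdd p.y)) * (p * ⟨1, 1, 0⟩) := by
  ext <;> simp [mul_ψ_comm]
  exact add_comm _ _

lemma isEssential_range_inl (hψ : Function.Injective ψ) : IsEssential (inl ψ).range := by
  refine isEssential_iff.mpr ⟨⟨fun p hp q => ?_⟩, fun N hN hdisj => ?_⟩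
  · obtain ⟨hx, hy⟩ := mem_range_inl.mp hp
    refine mem_range_inl.mpr ⟨?_, ?_⟩ <;> simp [hx, hy]
  have hzero : ∀ r : R, inl ψ (ψ (.ofAdd r)) ∈ N → r = 0 := by
    intro r hr
    have h1 : inl ψ (ψ (.ofAdd r)) = 1 := disjoint_def.mp hdisj ⟨_, rfl⟩ hr
    rwa [← map_one (inl ψ), inl_injective.eq_iff, OneMemClass.coe_eq_one, ← map_one ψ,
      hψ.eq_iff, ofAdd_eq_one] at h1
  refine (eq_bot_iff_forall N).mpr fun p hp =>
    disjoint_def.mp hdisj (mem_range_inl.mpr ⟨?_, ?_⟩) hp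
  · refine hzero _ ?_
    rw [← commutatorElement_eq_of_mul_eq (mul_mk_one_zero_one p)]
    exact commutator_le_left N ⊤ (commutator_mem_commutator hp (mem_top _))
  · refine hzero _ ?_
    rw [← commutatorElement_eq_of_mul_eq (mk_one_one_zero_mul p)]
    exact commutator_le_right ⊤ N (commutator_mem_commutator (mem_top _) hp)

end HeisenbergExtension

theorem exists_injective_zmod_hom_center {G : Type*} [Group G] (h : center G ≠ ⊥) :
    ∃ n : ℕ, n ≠ 1 ∧ ∃ ψ : Multiplicative (ZMod n) →* center G, Function.Injective ψ := by
  obtain ⟨z, hz⟩ := ne_bot_iff_exists_ne_one.mp h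
  let e := zmodCyclicMulEquiv (isCyclic_zpowers z)
  refine ⟨_, ?_, (zpowers z).subtype.comp e.toMonoidHom, Subtype.val_injective.comp e.injective⟩
  rw [Nat.card_zpowers, Ne, orderOf_eq_one_iff]
  exact fun h1 => hz (Subtype.ext (congrArg Subtype.val h1))

theorem center_eq_bot_of_forall_isEssential {G : Type u} [Group G]
    (hG : ∀ (Gbar : Type u) [Group Gbar], ∀ φ : G →* Gbar,
      Function.Injective φ → IsEssential φ.range → φ.range = ⊤) :
    center G = ⊥ := by
  by_contra h
  obtain ⟨n, hn, ψ, hψ⟩ := exists_injective_zmod_hom_center h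
  have : Nontrivial (ZMod n) := ZMod.nontrivial_iff.mpr hn
  exact HeisenbergExtension.range_inl_ne_top
    (hG _ _ HeisenbergExtension.inl_injective (HeisenbergExtension.isEssential_range_inl hψ))

theorem MulAut.mul_conj_mul_inv {G : Type*} [Group G] (σ : MulAut G) (g : G) :
    σ * MulAut.conj g * σ⁻¹ = MulAut.conj (σ g) := by
  ext h
  simp [MulAut.conj_apply]

theorem MulAut.conj_injective_of_center_eq_bot {G : Type*} [Group G] (h : center G = ⊥) :
    Function.Injective (MulAut.conj : G →* MulAut G) := by
  refine (injective_iff_map_eq_one _).mpr fun g hg => ?_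
  have hmem : g ∈ center G := mem_center_iff.mpr fun k => by
    have hk : g * k * g⁻¹ = k := congrArg (· k) hg
    exact (mul_inv_eq_iff_eq_mul.mp hk).symm
  simpa [h] using hmem

theorem isEssential_range_conj {G : Type*} [Group G] (h : center G = ⊥) :
    IsEssential (MulAut.conj : G →* MulAut G).range := by
  have hnormal : (MulAut.conj : G →* MulAut G).range.Normal :=
    ⟨by rintro _ ⟨g, rfl⟩ σ; exact ⟨σ g, (MulAut.mul_conj_mul_inv σ g).symm⟩⟩
  refine isEssential_iff.mpr
    ⟨hnormal, fun N hN hdisj => (eq_bot_iff_forall N).mpr fun σ hσ => ?_⟩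
  ext g
  have hcomm := commute_of_normal_of_disjoint _ _ hN hnormal hdisj.symm σ _ hσ ⟨g, rfl⟩
  refine MulAut.conj_injective_of_center_eq_bot h ?_
  rw [← MulAut.mul_conj_mul_inv, hcomm.eq, mul_inv_cancel_right]
  rfl

theorem MonoidHom.exists_map_conj_eq_conj {G Gbar : Type*} [Group G] [Group Gbar]
    (hinner : ∀ σ : MulAut G, ∃ g : G, σ = MulAut.conj g) {φ : G →* Gbar}
    (hφ : Function.Injective φ) [φ.range.Normal] (x : Gbar) :
    ∃ g : G, ∀ h : G, φ (g * h * g⁻¹) = x * φ h * x⁻¹ := by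
  let e := MonoidHom.ofInjective hφ
  obtain ⟨g, hg⟩ := hinner ((e.trans (MulAut.conjNormal x)).trans e.symm)
  refine ⟨g, fun h => ?_⟩
  rw [← MulAut.conj_apply, ← hg]
  change ((e (e.symm (MulAut.conjNormal x (e h)))) : Gbar) = _
  rw [MulEquiv.apply_symm_apply, MulAut.conjNormal_apply, MonoidHom.ofInjective_apply]

theorem IsCompleteGroup.range_eq_top_of_isEssential {G Gbar : Type*} [Group G] [Group Gbar]
    (hG : IsCompleteGroup G) {φ : G →* Gbar} (hφ : Function.Injective φ)
    (hE : IsEssential φ.range) : φ.range = ⊤ := by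
  obtain ⟨hZ, hinner⟩ := hG
  have hnormal : φ.range.Normal := hE.1
  have hC : centralizer (φ.range : Set Gbar) = ⊥ := by
    refine hE.eq_bot_of_disjoint inferInstance (disjoint_def.mpr ?_)
    rintro _ ⟨h, rfl⟩ hc
    have hh : h ∈ center G := mem_center_iff.mpr fun k =>
      hφ (by simpa using mem_centralizer_iff.mp hc (φ k) ⟨k, rfl⟩)
    rw [mem_bot.mp (hZ ▸ hh : h ∈ (⊥ : Subgroup G)), map_one]
  refine (eq_top_iff' _).mpr fun x => ?_
  obtain ⟨g, hg⟩ := φ.exists_map_conj_eq_conj hinner hφ x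
  have hy : (φ g)⁻¹ * x ∈ centralizer (φ.range : Set Gbar) := by
    rintro _ ⟨h, rfl⟩
    have hconj : φ g * φ h * (φ g)⁻¹ = x * φ h * x⁻¹ := by simpa using hg h
    calc φ h * ((φ g)⁻¹ * x) = (φ g)⁻¹ * (φ g * φ h * (φ g)⁻¹) * x := by group
      _ = (φ g)⁻¹ * (x * φ h * x⁻¹) * x := by rw [hconj]
      _ = (φ g)⁻¹ * x * φ h := by group
  rw [hC, mem_bot, inv_mul_eq_one] at hy
  exact ⟨g, hy⟩

theorem stmt15_general {G : Type u} [Group G] :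
    (∀ (Gbar : Type u) [Group Gbar], ∀ φ : G →* Gbar,
        Function.Injective φ → IsEssential φ.range → φ.range = ⊤) ↔
      IsCompleteGroup G := by
  refine ⟨fun hG => ?_, fun hG Gbar _ φ hφ hE => hG.range_eq_top_of_isEssential hφ hE⟩
  have hZ := center_eq_bot_of_forall_isEssential hG
  refine ⟨hZ, fun σ => ?_⟩
  have htop := hG _ MulAut.conj (MulAut.conj_injective_of_center_eq_bot hZ)
    (isEssential_range_conj hZ)
  obtain ⟨g, hg⟩ := htop ▸ mem_top σ
  exact ⟨g, hg.symm⟩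

/-- A nontrivial group `G` has no proper essential extension (every injective
homomorphism `φ : G → Ḡ` with essential image is surjective) iff `G` is complete. -/
theorem stmt15 {G : Type u} [Group G] [Nontrivial G] :
    (∀ (Gbar : Type u) [Group Gbar], ∀ φ : G →* Gbar,
        Function.Injective φ → IsEssential φ.range → φ.range = ⊤) ↔
      IsCompleteGroup G :=
  stmt15_general
end

section
/- Let G be a nontrivial group with the property that for every group Ḡ and every injective homomorphism φ : G → Ḡ with φ(G) normal in Ḡ, the image φ(G) is a direct summand of Ḡ (i.e., there is a normal subgroup T of Ḡ with φ(G) ∩ T = {1} and φ(G)T = Ḡ). Then G is a complete group. -/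
universe u

/-!
A normal complement `T` of a copy of `G` in `Ḡ` turns `Ḡ → Ḡ ⧸ T ≃ G` into a retraction `r` of the
embedding, and retractions are all the argument needs.

In the holomorph `G ⋊ Aut G`, an automorphism `σ` acts on `G` as conjugation by `inr σ`, so after
applying `r` it is conjugation by `r (inr σ)`: every automorphism is inner. For `σ = conj g` this
makes `g ↦ (r (inr (conj g)))⁻¹ * g` a retraction `c` of `G` onto its center, and
`g ↦ g * c(g)⁻²` is then an automorphism inverting the center; being inner, it fixes the center,
which therefore has exponent `2`. Finally, in `(G × ℤ) ⧸ ⟨(z, 2)⟩` the image `t` of `(1, 1)` is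
central with `t² = z⁻¹`, so `r t` is central and `z⁻¹ = (r t)² = 1`.
-/

open Subgroup

theorem Subgroup.normal_of_le_center {G : Type*} [Group G] {H : Subgroup G} (h : H ≤ center G) :
    H.Normal :=
  ⟨fun x hx g => by rwa [mem_center_iff.mp (h hx) g, mul_inv_cancel_right]⟩

theorem inv_mul_mem_center_of_conj_eq {G : Type*} [Group G] {a b : G}
    (h : MulAut.conj a = MulAut.conj b) : a⁻¹ * b ∈ center G := by
  refine mem_center_iff.mpr fun x => ?_
  have hx : a * x * a⁻¹ = b * x * b⁻¹ := by simpa using DFunLike.congr_fun h x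
  calc x * (a⁻¹ * b) = a⁻¹ * (a * x * a⁻¹) * b := by group
    _ = a⁻¹ * (b * x * b⁻¹) * b := by rw [hx]
    _ = a⁻¹ * b * x := by group

theorem MonoidHom.exists_retraction_of_normal_complement {G H : Type*} [Group G] [Group H]
    (φ : G →* H) (hφ : Function.Injective φ) {T : Subgroup H} [T.Normal]
    (hdis : φ.range ⊓ T = ⊥) (hsup : φ.range ⊔ T = ⊤) :
    ∃ r : H →* G, r.comp φ = MonoidHom.id G := by
  let f := (QuotientGroup.mk' T).comp φ
  have hf : Function.Bijective f := by
    refine ⟨(injective_iff_map_eq_one f).mpr fun g hg => hφ ?_, fun x => ?_⟩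
    · have : φ g ∈ φ.range ⊓ T := ⟨⟨g, rfl⟩, (QuotientGroup.eq_one_iff _).mp hg⟩
      simpa [hdis] using this
    · induction x using QuotientGroup.induction_on with | H x => ?_
      have hx : x ∈ ((φ.range ⊔ T : Subgroup H) : Set H) := by simp [hsup]
      rw [mul_normal] at hx
      obtain ⟨_, ⟨g, rfl⟩, t, ht, rfl⟩ := hx
      exact ⟨g, (QuotientGroup.mk_mul_of_mem _ ht).symm⟩
  refine ⟨(MulEquiv.ofBijective f hf).symm.toMonoidHom.comp (QuotientGroup.mk' T), ?_⟩
  ext g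
  exact (MulEquiv.ofBijective f hf).symm_apply_apply g

theorem MonoidHom.map_mem_center_of_comp_eq_id {G H : Type*} [Group G] [Group H]
    {φ : G →* H} {r : H →* G} (hr : r.comp φ = MonoidHom.id G) {x : H}
    (hx : ∀ g, x * φ g = φ g * x) : r x ∈ center G := by
  have hrφ (g : G) : r (φ g) = g := DFunLike.congr_fun hr g
  refine mem_center_iff.mpr fun g => ?_
  rw [← hrφ g, ← map_mul, ← map_mul, hx]

abbrev Holomorph (G : Type*) [Group G] := G ⋊[MonoidHom.id (MulAut G)] MulAut G

theorem Holomorph.eq_conj_of_retraction {G : Type*} [Group G] {r : Holomorph G →* G}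
    (hr : r.comp SemidirectProduct.inl = MonoidHom.id G) (σ : MulAut G) :
    σ = MulAut.conj (r (SemidirectProduct.inr σ)) := by
  have hrl (g : G) : r (SemidirectProduct.inl g) = g := DFunLike.congr_fun hr g
  ext g
  simpa [hrl] using congrArg r (SemidirectProduct.inl_aut (φ := MonoidHom.id (MulAut G)) σ g)

theorem exists_mulAut_apply_eq_inv_of_center_retraction {G : Type*} [Group G] (c : G →* G)
    (hc : ∀ g, c g ∈ center G) (hcz : ∀ z ∈ center G, c z = z) :
    ∃ σ : MulAut G, ∀ z ∈ center G, σ z = z⁻¹ := by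
  let e : G →* G :=
    { toFun g := g * (c g)⁻¹ ^ 2
      map_one' := by simp
      map_mul' a b := by
        have hu : (c a)⁻¹ ^ 2 ∈ center G := pow_mem (inv_mem (hc a)) 2
        have hcomm : Commute (c b)⁻¹ (c a)⁻¹ := (mem_center_iff.mp (inv_mem (hc b)) _).symm
        calc a * b * (c (a * b))⁻¹ ^ 2 = a * (b * (c a)⁻¹ ^ 2) * (c b)⁻¹ ^ 2 := by
              rw [map_mul, mul_inv_rev, hcomm.mul_pow, hcomm.pow_pow, mul_assoc, mul_assoc,
                mul_assoc]
          _ = a * (c a)⁻¹ ^ 2 * (b * (c b)⁻¹ ^ 2) := by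
              rw [mem_center_iff.mp hu b]; group }
  have hce (g : G) : c (e g) = (c g)⁻¹ := by
    change c (g * (c g)⁻¹ ^ 2) = _
    rw [map_mul, hcz _ (pow_mem (inv_mem (hc g)) 2)]
    group
  have hee : e.comp e = MonoidHom.id G := by
    ext g
    change e g * (c (e g))⁻¹ ^ 2 = g
    rw [hce]
    change g * (c g)⁻¹ ^ 2 * (c g)⁻¹⁻¹ ^ 2 = g
    group
  refine ⟨e.toMulEquiv e hee hee, fun z hz => ?_⟩
  change z * (c z)⁻¹ ^ 2 = z⁻¹
  rw [hcz z hz]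
  group

def NormalEmbeddingsRetract (G : Type u) [Group G] : Prop :=
  ∀ (H : Type u) [Group H] (φ : G →* H), Function.Injective φ → φ.range.Normal →
    ∃ r : H →* G, r.comp φ = MonoidHom.id G

namespace NormalEmbeddingsRetract

variable {G : Type u} [Group G]

theorem exists_holomorph_retraction (hG : NormalEmbeddingsRetract G) :
    ∃ r : Holomorph G →* G, r.comp SemidirectProduct.inl = MonoidHom.id G :=
  hG _ _ SemidirectProduct.inl_injective <| by
    rw [SemidirectProduct.range_inl_eq_ker_rightHom]
    exact MonoidHom.normal_ker _

theorem exists_eq_conj (hG : NormalEmbeddingsRetract G) (σ : MulAut G) :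
    ∃ g : G, σ = MulAut.conj g :=
  let ⟨_, hr⟩ := hG.exists_holomorph_retraction
  ⟨_, Holomorph.eq_conj_of_retraction hr σ⟩

theorem exists_center_retraction (hG : NormalEmbeddingsRetract G) :
    ∃ c : G →* G, (∀ g, c g ∈ center G) ∧ ∀ z ∈ center G, c z = z := by
  obtain ⟨r, hr⟩ := hG.exists_holomorph_retraction
  let q : G →* G := r.comp (SemidirectProduct.inr.comp MulAut.conj)
  have hc (g : G) : (q g)⁻¹ * g ∈ center G :=
    inv_mul_mem_center_of_conj_eq (Holomorph.eq_conj_of_retraction hr _).symm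
  refine ⟨MonoidHom.mk' (fun g => (q g)⁻¹ * g) fun a b => ?_, hc, fun z hz => ?_⟩
  · calc (q (a * b))⁻¹ * (a * b) = (q b)⁻¹ * ((q a)⁻¹ * a) * b := by simp only [map_mul]; group
      _ = (q a)⁻¹ * a * ((q b)⁻¹ * b) := by rw [mem_center_iff.mp (hc a)]; group
  · have hconj : MulAut.conj z = 1 := by
      ext x
      simp [(mem_center_iff.mp hz x).symm]
    simp [q, hconj]

theorem sq_eq_one_of_mem_center (hG : NormalEmbeddingsRetract G) {z : G} (hz : z ∈ center G) :
    z ^ 2 = 1 := by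
  obtain ⟨c, hc, hcz⟩ := hG.exists_center_retraction
  obtain ⟨σ, hσ⟩ := exists_mulAut_apply_eq_inv_of_center_retraction c hc hcz
  obtain ⟨g, rfl⟩ := hG.exists_eq_conj σ
  have hzinv : z⁻¹ = z := by
    rw [← hσ z hz, MulAut.conj_apply, mem_center_iff.mp hz g, mul_inv_cancel_right]
  rw [sq]
  exact inv_eq_iff_mul_eq_one.mp hzinv

theorem exists_pow_eq_of_mem_center (hG : NormalEmbeddingsRetract G) {z : G}
    (hz : z ∈ center G) {n : ℕ} (hn : n ≠ 0) : ∃ w ∈ center G, w ^ n = z := by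
  let m : G × Multiplicative ℤ := (z, .ofAdd (n : ℤ))
  have hm : m ∈ center (G × Multiplicative ℤ) :=
    mem_center_iff.mpr fun p => Prod.ext (mem_center_iff.mp hz p.1) (mul_comm _ _)
  have : (zpowers m).Normal := normal_of_le_center (zpowers_le.mpr hm)
  let φ := (QuotientGroup.mk' (zpowers m)).comp (MonoidHom.inl G (Multiplicative ℤ))
  have hφ : Function.Injective φ := by
    refine (injective_iff_map_eq_one φ).mpr fun g hg => ?_
    obtain ⟨k, hk⟩ := mem_zpowers_iff.mp ((QuotientGroup.eq_one_iff _).mp hg)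
    simp [m, Prod.ext_iff, hn] at hk
    rw [← hk.1, hk.2, zpow_zero]
  have hN : φ.range.Normal := by
    rw [MonoidHom.range_comp]
    refine Normal.map ⟨fun x hx p => ?_⟩ _ (QuotientGroup.mk'_surjective _)
    obtain ⟨g, rfl⟩ := hx
    exact ⟨p.1 * g * p.1⁻¹, by ext <;> simp⟩
  obtain ⟨r, hr⟩ := hG _ φ hφ hN
  let t := QuotientGroup.mk' (zpowers m) (1, .ofAdd 1)
  have ht_comm (g : G) : t * φ g = φ g * t := by
    simp only [t, φ, MonoidHom.comp_apply, MonoidHom.inl_apply, ← map_mul]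
    congr 1
    ext <;> simp
  have ht_pow : t ^ n * φ z = 1 := by
    have : ((1, .ofAdd 1) : G × Multiplicative ℤ) ^ n * (z, 1) = m := by ext <;> simp [m]
    simp only [t, φ, MonoidHom.comp_apply, MonoidHom.inl_apply, ← map_pow, ← map_mul, this]
    exact (QuotientGroup.eq_one_iff m).mpr (mem_zpowers m)
  refine ⟨(r t)⁻¹, inv_mem (MonoidHom.map_mem_center_of_comp_eq_id hr ht_comm), ?_⟩
  have hrt := congrArg r ht_pow
  rw [map_mul, map_pow, map_one, show r (φ z) = z from DFunLike.congr_fun hr z] at hrt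
  rw [inv_pow]
  exact inv_eq_of_mul_eq_one_right hrt

theorem center_eq_bot (hG : NormalEmbeddingsRetract G) : center G = ⊥ := by
  refine (eq_bot_iff_forall _).mpr fun z hz => ?_
  obtain ⟨w, hw, rfl⟩ := hG.exists_pow_eq_of_mem_center hz two_ne_zero
  exact hG.sq_eq_one_of_mem_center hw

end NormalEmbeddingsRetract

theorem stmt16_general {G : Type u} [Group G]
    (hsum : ∀ (Gbar : Type u) [Group Gbar], ∀ φ : G →* Gbar,
      Function.Injective φ → (φ.range).Normal →
        ∃ T : Subgroup Gbar, T.Normal ∧ φ.range ⊓ T = ⊥ ∧ φ.range ⊔ T = ⊤) :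
    IsCompleteGroup G := by
  have hG : NormalEmbeddingsRetract G := fun H _ φ hφ hN => by
    obtain ⟨T, _, hdis, hsup⟩ := hsum H φ hφ hN
    exact φ.exists_retraction_of_normal_complement hφ hdis hsup
  exact ⟨hG.center_eq_bot, hG.exists_eq_conj⟩

/-- If `G` is a nontrivial group such that for every injective homomorphism
`φ : G → Ḡ` with normal image, `φ(G)` is a direct summand of `Ḡ`, then `G` is
complete. -/
theorem stmt16 {G : Type u} [Group G] [Nontrivial G]
    (hsum : ∀ (Gbar : Type u) [Group Gbar], ∀ φ : G →* Gbar,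
      Function.Injective φ → (φ.range).Normal →
        ∃ T : Subgroup Gbar, T.Normal ∧ φ.range ⊓ T = ⊥ ∧ φ.range ⊔ T = ⊤) :
    IsCompleteGroup G :=
  stmt16_general hsum
end

section
/- Every nontrivial abelian group G has a proper essential extension: there exist a group Ḡ and an injective homomorphism φ : G → Ḡ such that φ(G) is an essential subgroup of Ḡ and φ(G) ≠ Ḡ. -/
/-!
A normal subgroup is essential as soon as the normal closure of each element outside it contains
a nontrivial element of the subgroup.

If some `g ∈ G` is not a square, adjoin a square root `r` of `g` (abelian extension): any
`y ∉ G` is `a r` with odd exponent, and `y² = a² g^{odd} ∈ G` cannot be trivial, since otherwise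
`g` would be a square.

If every element is a square, pick `x` with `x² ≠ 1` (possible as `G ≠ 1`) and take the
generalized dihedral group `G ⋊ ℤˣ`, where `-1` acts by inversion: any `y ∉ G` inverts `G`
under conjugation, so the commutator `⁅x, y⁆ = x²` is a nontrivial element of `G` in the normal
closure of `y`.
-/

universe u

theorem IsEssential.of_forall_not_mem {H : Type*} [Group H] {E : Subgroup H} (hE : E.Normal)
    (h : ∀ y ∉ E, ∃ z ∈ Subgroup.normalClosure {y}, z ∈ E ∧ z ≠ 1) : IsEssential E := by
  refine ⟨hE, fun N hN hN₀ => ?_⟩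
  obtain ⟨y, hyN, hy₁⟩ := N.bot_or_exists_ne_one.resolve_left hN₀
  rw [← Subgroup.nontrivial_iff_ne_bot, Subgroup.nontrivial_iff_exists_ne_one]
  by_cases hyE : y ∈ E
  · exact ⟨y, ⟨hyE, hyN⟩, hy₁⟩
  · obtain ⟨z, hzy, hzE, hz₁⟩ := h y hyE
    exact ⟨z, ⟨hzE, Subgroup.normalClosure_le_normal (Set.singleton_subset_iff.2 hyN) hzy⟩, hz₁⟩

section GeneralizedDihedral

open SemidirectProduct
open scoped commutatorElement

variable (G : Type u) [CommGroup G]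

def unitsZPowMulAut : ℤˣ →* MulAut G where
  toFun u :=
    { zpowGroupHom (u : ℤ) with
      invFun := fun x => x ^ (u : ℤ)
      left_inv := fun x => by simp [← zpow_mul, ← Units.val_mul, Int.units_mul_self]
      right_inv := fun x => by simp [← zpow_mul, ← Units.val_mul, Int.units_mul_self] }
  map_one' := by ext; simp
  map_mul' u v := by ext; simp [MulAut.mul_apply, mul_comm (u : ℤ), zpow_mul]

variable {G}

@[simp]
theorem unitsZPowMulAut_apply (u : ℤˣ) (x : G) : unitsZPowMulAut G u x = x ^ (u : ℤ) := rfl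

theorem commutatorElement_inl_of_right_ne_one (x : G) {y : G ⋊[unitsZPowMulAut G] ℤˣ}
    (hy : y.right ≠ 1) : ⁅(inl x : G ⋊[unitsZPowMulAut G] ℤˣ), y⁆ = inl (x ^ 2) := by
  rw [Int.units_ne_iff_eq_neg] at hy
  ext <;> simp [commutatorElement_def, hy, pow_two, mul_right_comm _ x]

theorem isEssential_range_inl_unitsZPowMulAut {x : G} (hx : x ^ 2 ≠ 1) :
    IsEssential (inl : G →* G ⋊[unitsZPowMulAut G] ℤˣ).range := by
  have hnormal : (inl : G →* G ⋊[unitsZPowMulAut G] ℤˣ).range.Normal := by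
    rw [range_inl_eq_ker_rightHom]
    infer_instance
  refine .of_forall_not_mem hnormal fun y hy => ?_
  have hy₁ : y.right ≠ 1 := fun h => hy ⟨y.left, by ext <;> simp [h]⟩
  refine ⟨⁅(inl x : G ⋊[unitsZPowMulAut G] ℤˣ), y⁆, ?_, ⟨x ^ 2, ?_⟩, ?_⟩
  · exact Subgroup.commutator_le_right ⊤ _ <|
      Subgroup.commutator_mem_commutator (Subgroup.mem_top _) (Subgroup.subset_normalClosure (Set.mem_singleton _))
  · exact (commutatorElement_inl_of_right_ne_one x hy₁).symm
  · rw [commutatorElement_inl_of_right_ne_one x hy₁]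
    exact (map_ne_one_iff _ inl_injective).2 hx

theorem range_inl_unitsZPowMulAut_ne_top :
    (inl : G →* G ⋊[unitsZPowMulAut G] ℤˣ).range ≠ ⊤ := by
  intro h
  obtain ⟨x, hx⟩ := h.ge (Subgroup.mem_top (inr (-1)))
  simpa using congrArg right hx

end GeneralizedDihedral

theorem isSquare_of_sq_mul_zpow_odd_eq_one {G : Type*} [CommGroup G] {a g : G} {m : ℤ}
    (h : a ^ 2 * g ^ (2 * m + 1) = 1) : IsSquare g := by
  refine ⟨(a * g ^ m)⁻¹, ?_⟩
  rw [← mul_inv, eq_inv_iff_mul_eq_one, ← h, zpow_add_one, two_mul, zpow_add, pow_two]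
  ac_rfl

/-- `G` with a square root of `g` adjoined: the class of `(1, ofAdd 1)` squares to the class of
`(g, 1)`, because `(g, ofAdd (-2))` is killed. -/
abbrev AdjoinSqrt {G : Type u} [CommGroup G] (g : G) : Type u :=
  (G × Multiplicative ℤ) ⧸ Subgroup.zpowers (g, Multiplicative.ofAdd (-2 : ℤ))

namespace AdjoinSqrt

variable {G : Type u} [CommGroup G] (g : G)

def of : G →* AdjoinSqrt g :=
  (QuotientGroup.mk' _).comp (MonoidHom.inl G (Multiplicative ℤ))

variable {g}

theorem exists_eq_of_mem_zpowers {p : G × Multiplicative ℤ}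
    (hp : p ∈ Subgroup.zpowers (g, Multiplicative.ofAdd (-2 : ℤ))) :
    ∃ n : ℤ, p.1 = g ^ n ∧ p.2.toAdd = -2 * n := by
  obtain ⟨n, rfl⟩ := Subgroup.mem_zpowers_iff.1 hp
  exact ⟨n, rfl, by simp [mul_comm]⟩

theorem of_injective : Function.Injective (of g) := by
  refine (injective_iff_map_eq_one _).2 fun a ha => ?_
  obtain ⟨n, ha, hn⟩ := exists_eq_of_mem_zpowers (QuotientGroup.eq_one_iff _ |>.1 ha)
  have hn₀ : n = 0 := by simpa using hn
  simpa [hn₀] using ha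

theorem mk_ofAdd_two_mul (a : G) (m : ℤ) :
    (QuotientGroup.mk (a, Multiplicative.ofAdd (2 * m)) : AdjoinSqrt g) = of g (a * g ^ m) := by
  refine (QuotientGroup.eq.2 ?_).symm
  convert Subgroup.zpow_mem_zpowers _ (-m) using 1
  ext <;> simp [mul_comm]

theorem mk_ofAdd_mem_range_of_iff (a : G) (t : ℤ) :
    (QuotientGroup.mk (a, Multiplicative.ofAdd t) : AdjoinSqrt g) ∈ (of g).range ↔ Even t := by
  constructor
  · rintro ⟨b, hb⟩
    obtain ⟨n, -, hn⟩ := exists_eq_of_mem_zpowers (QuotientGroup.eq.1 hb)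
    have ht : t = -2 * n := by simpa using hn
    exact ⟨-n, by omega⟩
  · rintro ⟨m, rfl⟩
    rw [← two_mul, mk_ofAdd_two_mul]
    exact ⟨_, rfl⟩

theorem mk_ofAdd_sq (a : G) (t : ℤ) :
    (QuotientGroup.mk (a, Multiplicative.ofAdd t) : AdjoinSqrt g) ^ 2 = of g (a ^ 2 * g ^ t) := by
  rw [← mk_ofAdd_two_mul, ← QuotientGroup.mk_pow]
  rfl

theorem range_of_ne_top : (of g).range ≠ ⊤ := fun h =>
  Int.not_even_one ((mk_ofAdd_mem_range_of_iff 1 1).1 (h ▸ Subgroup.mem_top _))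

theorem isEssential_range_of (hg : ¬ IsSquare g) : IsEssential (of g).range := by
  refine .of_forall_not_mem (Subgroup.normal_of_isMulCommutative _) fun y hy => ?_
  obtain ⟨⟨a, t⟩, rfl⟩ := QuotientGroup.mk_surjective y
  obtain ⟨t, rfl⟩ := Multiplicative.ofAdd.surjective t
  obtain ⟨m, rfl⟩ : Odd t :=
    Int.not_even_iff_odd.1 fun h => hy ((mk_ofAdd_mem_range_of_iff a t).2 h)
  refine ⟨(QuotientGroup.mk (a, Multiplicative.ofAdd (2 * m + 1)) : AdjoinSqrt g) ^ 2,
    Subgroup.pow_mem _ (Subgroup.subset_normalClosure (Set.mem_singleton _)) 2, ?_⟩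
  rw [mk_ofAdd_sq]
  exact ⟨⟨_, rfl⟩, (map_ne_one_iff _ of_injective).2 fun h =>
    hg (isSquare_of_sq_mul_zpow_odd_eq_one h)⟩

end AdjoinSqrt

/-- Every nontrivial abelian group has a proper essential extension: there are a group
`Ḡ` and an injective homomorphism `φ : G → Ḡ` whose image is a proper essential
subgroup of `Ḡ`. -/
theorem stmt17 {G : Type u} [CommGroup G] [Nontrivial G] :
    ∃ (Gbar : GrpCat.{u}) (φ : G →* Gbar),
      Function.Injective φ ∧ IsEssential φ.range ∧ φ.range ≠ ⊤ := by
  by_cases h : ∀ g : G, IsSquare g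
  · obtain ⟨g, hg⟩ := exists_ne (1 : G)
    obtain ⟨x, rfl⟩ := h g
    exact ⟨.of (G ⋊[unitsZPowMulAut G] ℤˣ), SemidirectProduct.inl,
      SemidirectProduct.inl_injective,
      isEssential_range_inl_unitsZPowMulAut (by rwa [pow_two]),
      range_inl_unitsZPowMulAut_ne_top⟩
  · obtain ⟨g, hg⟩ := not_forall.1 h
    exact ⟨.of (AdjoinSqrt g), AdjoinSqrt.of g, AdjoinSqrt.of_injective,
      AdjoinSqrt.isEssential_range_of hg, AdjoinSqrt.range_of_ne_top⟩
end

section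
/- Let I be a group which is an extensional object in the category of groups, i.e., for every injective group homomorphism f : N → G whose image f(N) is a normal subgroup of G, and every homomorphism φ : N → I, there exists a homomorphism h : G → I with h ∘ f = φ. Then I is the trivial group. -/
universe u

namespace SemidirectProduct

variable {N G K : Type*} [Group N] [Group G] [Group K] {φ : G →* MulAut N}

theorem normal_range_inl : (inl : N →* N ⋊[φ] G).range.Normal := by
  rw [range_inl_eq_ker_rightHom]
  infer_instance

theorem map_inl_aut (h : N ⋊[φ] G →* K) (g : G) (n : N) :
    h (inl (φ g n)) = h (inr g) * h (inl n) * (h (inr g))⁻¹ := by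
  simp only [inl_aut, map_mul, map_inv]

end SemidirectProduct

open SemidirectProduct in
/-- If `I` is an *extensional object* in the category of groups — for every injective
homomorphism `f : N → G` with normal image and every homomorphism `φ : N → I` there is
`h : G → I` with `h ∘ f = φ` — then `I` is the trivial group. -/
theorem stmt18 {I : Type u} [Group I]
    (hext : ∀ (N G : Type u) [Group N] [Group G], ∀ f : N →* G,
      Function.Injective f → (f.range).Normal →
        ∀ φ : N →* I, ∃ h : G →* I, h.comp f = φ) :
    ∀ x : I, x = 1 := by
  intro x
  -- Extend the first projection of `I × I` to its holomorph; the swap automorphism then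
  -- conjugates `(1, x)`, which is killed, to `(x, 1)`, which is sent to `x`.
  obtain ⟨h, hh⟩ := hext (I × I) ((I × I) ⋊[MonoidHom.id _] MulAut (I × I)) inl
    inl_injective normal_range_inl (MonoidHom.fst I I)
  have h_inl (p : I × I) : h (inl p) = p.1 := DFunLike.congr_fun hh p
  have hconj : h (inl (x, 1)) = h (inr MulEquiv.prodComm) * h (inl (1, x)) *
      (h (inr MulEquiv.prodComm))⁻¹ :=
    map_inl_aut h MulEquiv.prodComm (1, x)
  rwa [h_inl, h_inl, mul_one, mul_inv_cancel] at hconj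
end

section
/- The only injective object in the category of groups is the trivial group: if a group J is an injective object in the category of groups (for every monomorphism K → L and every morphism K → J there exists a morphism L → J making the triangle commute), then J is trivial. -/
/-!
Let `t = (· + 1)` in `Equiv.Perm ℚ`. It has infinite order, it is conjugate to `t ^ 2`
(by `(2 * ·)`) and it is inverted by the involution `(- ·)`. If `J` is injective, every `x : J`
is the image of `t` under some homomorphism `Equiv.Perm ℚ →* J`, so every element of `J` is
conjugate to its square and inverted by an involution. Such a group is trivial: an involution `u`
is conjugate to `u ^ 2 = 1`, so `u = 1`; hence `x = x⁻¹`, and then `x` is conjugate to `x ^ 2 = 1`.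
-/

universe u

section Group

variable {G : Type*} [Group G]

theorem eq_one_of_isConj_sq {x : G} (hconj : IsConj x (x ^ 2)) (hx : x ^ 2 = 1) : x = 1 :=
  isConj_one_left.mp (hx ▸ hconj)

theorem eq_one_of_forall_isConj_sq_of_forall_inverted_by_involution
    (hsq : ∀ x : G, IsConj x (x ^ 2))
    (hinv : ∀ x : G, ∃ u : G, u ^ 2 = 1 ∧ u * x * u⁻¹ = x⁻¹) (x : G) : x = 1 := by
  obtain ⟨u, hu_sq, hux⟩ := hinv x
  obtain rfl : u = 1 := eq_one_of_isConj_sq (hsq u) hu_sq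
  have hx_sq : x ^ 2 = 1 := by
    rw [one_mul, inv_one, mul_one] at hux
    rw [sq, ← mul_inv_cancel x, ← hux]
  exact eq_one_of_isConj_sq (hsq x) hx_sq

end Group

namespace Equiv

theorem addRight_pow {A : Type*} [AddGroup A] (a : A) (n : ℕ) :
    Equiv.addRight a ^ n = Equiv.addRight (n • a) := by
  induction n with
  | zero => ext; simp
  | succ n ih => ext x; simp [pow_succ, ih, Perm.mul_apply, succ_nsmul', add_assoc]

theorem isOfFinAddOrder_of_isOfFinOrder_addRight {A : Type*} [AddGroup A] {a : A}
    (ha : IsOfFinOrder (Equiv.addRight a)) : IsOfFinAddOrder a := by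
  obtain ⟨n, hn, hpow⟩ := isOfFinOrder_iff_pow_eq_one.mp ha
  refine isOfFinAddOrder_iff_nsmul_eq_zero.mpr ⟨n, hn, ?_⟩
  simpa [addRight_pow] using DFunLike.congr_fun hpow 0

theorem mulLeft₀_mul_addRight_mul_inv {K : Type*} [DivisionRing K] {c : K} (hc : c ≠ 0) (a : K) :
    Equiv.mulLeft₀ c hc * Equiv.addRight a * (Equiv.mulLeft₀ c hc)⁻¹ = Equiv.addRight (c * a) := by
  ext x
  simp [Perm.mul_apply, Perm.inv_def, Equiv.mulLeft₀, mul_add, hc]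

theorem neg_mul_addRight_mul_inv {A : Type*} [AddCommGroup A] (a : A) :
    Equiv.neg A * Equiv.addRight a * (Equiv.neg A)⁻¹ = (Equiv.addRight a)⁻¹ := by
  ext x
  simp [Perm.mul_apply, Perm.inv_def, add_comm]

theorem neg_sq (A : Type*) [InvolutiveNeg A] : Equiv.neg A ^ 2 = 1 := by
  ext x
  simp [sq, Perm.mul_apply]

end Equiv

theorem isConj_addRight_sq {K : Type*} [DivisionRing K] (h2 : (2 : K) ≠ 0) (a : K) :
    IsConj (Equiv.addRight a) (Equiv.addRight a ^ 2) :=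
  isConj_iff.mpr ⟨Equiv.mulLeft₀ 2 h2, by
    rw [Equiv.mulLeft₀_mul_addRight_mul_inv, Equiv.addRight_pow, two_nsmul, two_mul]⟩

theorem injective_zpowersHom_addRight {A : Type*} [AddGroup A] [IsAddTorsionFree A] {a : A}
    (ha : a ≠ 0) : Function.Injective (zpowersHom (Equiv.Perm A) (Equiv.addRight a)) :=
  (injective_zpow_iff_not_isOfFinOrder.mpr fun h =>
    not_isOfFinAddOrder_of_isAddTorsionFree ha
      (Equiv.isOfFinAddOrder_of_isOfFinOrder_addRight h)).comp Multiplicative.toAdd.injective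

def IsInjectiveGroup (J : Type u) [Group J] : Prop :=
  ∀ (K L : Type u) [Group K] [Group L], ∀ f : K →* L,
    Function.Injective f → ∀ φ : K →* J, ∃ h : L →* J, h.comp f = φ

namespace IsInjectiveGroup

variable {J : Type u} [Group J]

theorem exists_comp_eq (hJ : IsInjectiveGroup J) {K L : Type} [Group K] [Group L] (f : K →* L)
    (hf : Function.Injective f) (φ : K →* J) : ∃ h : L →* J, h.comp f = φ := by
  let liftK : ULift.{u} K ≃* K := MulEquiv.ulift
  let liftL : ULift.{u} L ≃* L := MulEquiv.ulift
  obtain ⟨h, hh⟩ := hJ _ _ ((liftL.symm.toMonoidHom.comp f).comp liftK.toMonoidHom)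
    (liftL.symm.injective.comp (hf.comp liftK.injective)) (φ.comp liftK.toMonoidHom)
  refine ⟨h.comp liftL.symm.toMonoidHom, MonoidHom.ext fun k => ?_⟩
  exact DFunLike.congr_fun hh (ULift.up k)

theorem exists_map_addRight_one_eq (hJ : IsInjectiveGroup J) (x : J) :
    ∃ h : Equiv.Perm ℚ →* J, h (Equiv.addRight 1) = x := by
  obtain ⟨h, hh⟩ := hJ.exists_comp_eq _ (injective_zpowersHom_addRight (one_ne_zero (α := ℚ)))
    (zpowersHom J x)
  refine ⟨h, ?_⟩
  simpa using DFunLike.congr_fun hh (Multiplicative.ofAdd 1)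

end IsInjectiveGroup

/-- The only injective object in the category of groups is the trivial group: if for
every injective homomorphism `f : K → L` and every homomorphism `φ : K → J` there is
`h : L → J` with `h ∘ f = φ`, then `J` is trivial. -/
theorem stmt19 {J : Type u} [Group J]
    (hinj : ∀ (K L : Type u) [Group K] [Group L], ∀ f : K →* L,
      Function.Injective f →
        ∀ φ : K →* J, ∃ h : L →* J, h.comp f = φ) :
    ∀ x : J, x = 1 := by
  have hJ : IsInjectiveGroup J := hinj
  refine eq_one_of_forall_isConj_sq_of_forall_inverted_by_involution (fun x => ?_) (fun x => ?_)
  · obtain ⟨h, rfl⟩ := hJ.exists_map_addRight_one_eq x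
    rw [← map_pow]
    exact h.map_isConj (isConj_addRight_sq two_ne_zero 1)
  · obtain ⟨h, rfl⟩ := hJ.exists_map_addRight_one_eq x
    refine ⟨h (Equiv.neg ℚ), ?_, ?_⟩
    · rw [← map_pow, Equiv.neg_sq, map_one]
    · rw [← map_inv, ← map_mul, ← map_mul, Equiv.neg_mul_addRight_mul_inv, map_inv]
end
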